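/- arXiv:2503.24055 — 5 statements merged into one kernel-verified Lean document; each statement's English description precedes it below -/
import Mathlib

section
/- Let b : [0,∞) × 𝕋 → ℝ² be a C¹ solution of the perfectly conducting system ∂_t b + ∂_x(u b) = 0, ∂_x u = (1/2)(|b|² − ∫_𝕋 |b|²), on the torus 𝕋 = ℝ/ℤ of unit measure. Then the L¹ norm of |b| is conserved in time: for all t ≥ 0, ∫_𝕋 |b(t,x)| dx = ∫_𝕋 |b(0,x)| dx. -/
open MeasureTheory Real Set

set_option maxHeartbeats 1000000

/-- For a `C¹` solution `b` of the perfectly conducting system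
`∂ₜ b + ∂ₓ(u b) = 0`, `∂ₓ u = ½(|b|² − ∫_𝕋 |b|²)` on the unit torus (modelled by
1-periodic functions on `ℝ`), the `L¹` norm of `|b|` is conserved in time. -/
theorem l1_norm_conserved
    (b : ℝ → ℝ → EuclideanSpace ℝ (Fin 2)) (u : ℝ → ℝ → ℝ)
    (hb : ContDiff ℝ 1 (fun p : ℝ × ℝ => b p.1 p.2))
    (hu : ContDiff ℝ 1 (fun p : ℝ × ℝ => u p.1 p.2))
    (hbper : ∀ t x, b t (x + 1) = b t x)
    (huper : ∀ t x, u t (x + 1) = u t x)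
    (hux : ∀ t, 0 ≤ t → ∀ x, deriv (fun y => u t y) x
      = (1 / 2) * (‖b t x‖ ^ 2 - ∫ y in (0:ℝ)..1, ‖b t y‖ ^ 2))
    (hpde : ∀ t, 0 ≤ t → ∀ x,
      deriv (fun s => b s x) t + deriv (fun y => u t y • b t y) x = 0) :
    ∀ t, 0 ≤ t → (∫ x in (0:ℝ)..1, ‖b t x‖) = ∫ x in (0:ℝ)..1, ‖b 0 x‖ := by
  intro T hT
  set B : ℝ × ℝ → EuclideanSpace ℝ (Fin 2) := fun p => b p.1 p.2 with hBdef
  -- basic regularity facts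
  have hBc : Continuous B := hb.continuous
  have hbtx : ∀ t, ContDiff ℝ 1 (fun y => b t y) := by
    intro t
    exact hb.comp (contDiff_const.prodMk contDiff_id)
  have hbst : ∀ x, ContDiff ℝ 1 (fun s => b s x) := by
    intro x
    exact hb.comp (contDiff_id.prodMk contDiff_const)
  have hutx : ∀ t, ContDiff ℝ 1 (fun y => u t y) := by
    intro t
    exact hu.comp (contDiff_const.prodMk contDiff_id)
  -- time and space partial derivatives of b
  set bt : ℝ → ℝ → EuclideanSpace ℝ (Fin 2) := fun t x => deriv (fun s => b s x) t with hbtdef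
  set bx : ℝ → ℝ → EuclideanSpace ℝ (Fin 2) := fun t x => deriv (fun y => b t y) x with hbxdef
  set ux : ℝ → ℝ → ℝ := fun t x => deriv (fun y => u t y) x with huxdef
  have hder_bt : ∀ t x, HasDerivAt (fun s => b s x) (bt t x) t := fun t x =>
    (((hbst x).differentiable one_ne_zero) t).hasDerivAt
  have hder_bx : ∀ t x, HasDerivAt (fun y => b t y) (bx t x) x := fun t x =>
    (((hbtx t).differentiable one_ne_zero) x).hasDerivAt
  have hder_ux : ∀ t x, HasDerivAt (fun y => u t y) (ux t x) x := fun t x =>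
    (((hutx t).differentiable one_ne_zero) x).hasDerivAt
  -- joint continuity of the time derivative of b
  have hbt_eq : ∀ t x, bt t x = fderiv ℝ B (t, x) (1, 0) := by
    intro t x
    have h1 : HasDerivAt (fun s : ℝ => (s, x)) ((1 : ℝ), (0 : ℝ)) t :=
      (hasDerivAt_id t).prodMk (hasDerivAt_const t x)
    have h2 : HasFDerivAt B (fderiv ℝ B (t, x)) (t, x) :=
      ((hb.differentiable one_ne_zero) (t, x)).hasFDerivAt
    exact ((HasFDerivAt.comp_hasDerivAt (l := B) (f := fun s : ℝ => (s, x)) (x := t) h2 h1 : HasDerivAt (fun s => b s x) _ t).unique (hder_bt t x)).symm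
  have hbtc : Continuous fun p : ℝ × ℝ => bt p.1 p.2 := by
    have : Continuous fun p : ℝ × ℝ => fderiv ℝ B p (1, 0) :=
      (hb.continuous_fderiv one_ne_zero).clm_apply continuous_const
    exact this.congr fun p => (hbt_eq p.1 p.2).symm
  -- PDE in product-rule form
  have hPDE : ∀ t, 0 ≤ t → ∀ x, bt t x = -(u t x • bx t x + ux t x • b t x) := by
    intro t ht x
    have hprod : HasDerivAt (fun y => u t y • b t y)
        (u t x • bx t x + ux t x • b t x) x := (hder_ux t x).smul (hder_bx t x)
    have h0 := hpde t ht x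
    rw [hprod.deriv] at h0
    exact eq_neg_of_add_eq_zero_left h0
  -- uniform bound on ‖b‖² over [0,T]×[0,1]
  obtain ⟨M, hM⟩ := ((isCompact_Icc (a := (0:ℝ)) (b := T)).prod
      (isCompact_Icc (a := (0:ℝ)) (b := 1))).exists_bound_of_continuousOn
      (f := fun p : ℝ × ℝ => ‖B p‖ ^ 2) ((hBc.norm.pow 2).continuousOn)
  have hMb : ∀ t ∈ Icc (0:ℝ) T, ∀ x ∈ Icc (0:ℝ) 1, ‖b t x‖ ^ 2 ≤ M := by
    intro t ht x hx
    have := hM (t, x) (mk_mem_prod ht hx)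
    calc ‖b t x‖ ^ 2 ≤ |‖b t x‖ ^ 2| := le_abs_self _
      _ ≤ M := this
  have hMnn : 0 ≤ M := by
    have := hM (0, 0) (mk_mem_prod (left_mem_Icc.2 hT) (left_mem_Icc.2 zero_le_one))
    exact le_trans (norm_nonneg _) this
  have hbsq_int : ∀ t : ℝ, IntervalIntegrable (fun y => ‖b t y‖ ^ 2) volume 0 1 :=
    fun t => (((hbtx t).continuous.norm).pow 2).intervalIntegrable 0 1
  have hintM : ∀ t ∈ Icc (0:ℝ) T, (∫ y in (0:ℝ)..1, ‖b t y‖ ^ 2) ≤ M := by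
    intro t ht
    calc (∫ y in (0:ℝ)..1, ‖b t y‖ ^ 2) ≤ ∫ _ in (0:ℝ)..1, M := by
          refine intervalIntegral.integral_mono_on zero_le_one (hbsq_int t)
            (intervalIntegrable_const) (fun x hx => hMb t ht x hx)
      _ = M := by simp
  have hintnn : ∀ t : ℝ, 0 ≤ ∫ y in (0:ℝ)..1, ‖b t y‖ ^ 2 := by
    intro t
    exact intervalIntegral.integral_nonneg zero_le_one (fun x _ => by positivity)
  have huxM : ∀ t ∈ Icc (0:ℝ) T, ∀ x ∈ Icc (0:ℝ) 1, |ux t x| ≤ M := by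
    intro t ht x hx
    have h1 : ux t x = (1 / 2) * (‖b t x‖ ^ 2 - ∫ y in (0:ℝ)..1, ‖b t y‖ ^ 2) :=
      hux t ht.1 x
    rw [h1, abs_le]
    have h2 := hMb t ht x hx
    have h3 := hintM t ht
    have h4 := hintnn t
    have h5 : (0:ℝ) ≤ ‖b t x‖ ^ 2 := by positivity
    constructor <;> nlinarith
  -- main ε-regularized estimate
  have key : ∀ ε : ℝ, 0 < ε →
      |(∫ x in (0:ℝ)..1, ‖b T x‖) - ∫ x in (0:ℝ)..1, ‖b 0 x‖| ≤ ε * (2 + M * T) := by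
    intro ε hε
    set g : ℝ → ℝ → ℝ := fun t x => Real.sqrt (ε ^ 2 + ‖b t x‖ ^ 2) with hgdef
    have hgpos : ∀ t x, 0 < g t x := fun t x => Real.sqrt_pos.2 (by positivity)
    have hgsq : ∀ t x, g t x ^ 2 = ε ^ 2 + ‖b t x‖ ^ 2 := fun t x =>
      Real.sq_sqrt (by positivity)
    have hge : ∀ t x, ε ≤ g t x := by
      intro t x
      have h1 : ε = Real.sqrt (ε ^ 2) := (Real.sqrt_sq hε.le).symm
      rw [h1]
      exact Real.sqrt_le_sqrt (by nlinarith [sq_nonneg (‖b t x‖)])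
    have hnle : ∀ t x, ‖b t x‖ ≤ g t x := by
      intro t x
      have h1 : ‖b t x‖ = Real.sqrt (‖b t x‖ ^ 2) := (Real.sqrt_sq (norm_nonneg _)).symm
      rw [h1]
      exact Real.sqrt_le_sqrt (by nlinarith)
    have hgle : ∀ t x, g t x ≤ ‖b t x‖ + ε := by
      intro t x
      have h1 : g t x ≤ Real.sqrt ((‖b t x‖ + ε) ^ 2) :=
        Real.sqrt_le_sqrt (by nlinarith [norm_nonneg (b t x)])
      rwa [Real.sqrt_sq (by positivity)] at h1
    -- continuity of g
    have hgc : Continuous fun p : ℝ × ℝ => g p.1 p.2 :=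
      Real.continuous_sqrt.comp (continuous_const.add (hBc.norm.pow 2))
    have hgct : ∀ t, Continuous fun x => g t x := fun t =>
      Real.continuous_sqrt.comp (continuous_const.add ((hbtx t).continuous.norm.pow 2))
    -- partial derivatives of g
    set gt : ℝ → ℝ → ℝ := fun t x => (inner ℝ (bt t x) (b t x) : ℝ) / g t x with hgtdef
    set gx : ℝ → ℝ → ℝ := fun t x => (inner ℝ (bx t x) (b t x) : ℝ) / g t x with hgxdef
    have hder_gt : ∀ t x, HasDerivAt (fun s => g s x) (gt t x) t := by
      intro t x
      have hi : HasDerivAt (fun s => ε ^ 2 + (inner ℝ (b s x) (b s x) : ℝ))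
          ((inner ℝ (b t x) (bt t x) : ℝ) + (inner ℝ (bt t x) (b t x) : ℝ)) t :=
        ((hder_bt t x).inner ℝ (hder_bt t x)).const_add (ε ^ 2)
      have hne : ε ^ 2 + (inner ℝ (b t x) (b t x) : ℝ) ≠ 0 := by
        rw [real_inner_self_eq_norm_sq]; positivity
      have hs := hi.sqrt hne
      have hfun : (fun s => Real.sqrt (ε ^ 2 + (inner ℝ (b s x) (b s x) : ℝ)))
          = fun s => g s x := by
        funext s; rw [real_inner_self_eq_norm_sq]
      rw [hfun] at hs
      convert hs using 1
      show (inner ℝ (bt t x) (b t x) : ℝ) / g t x = _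
      rw [real_inner_comm (bt t x) (b t x), real_inner_self_eq_norm_sq]
      simp only [hgdef]
      ring
    have hder_gx : ∀ t x, HasDerivAt (fun y => g t y) (gx t x) x := by
      intro t x
      have hi : HasDerivAt (fun y => ε ^ 2 + (inner ℝ (b t y) (b t y) : ℝ))
          ((inner ℝ (b t x) (bx t x) : ℝ) + (inner ℝ (bx t x) (b t x) : ℝ)) x :=
        ((hder_bx t x).inner ℝ (hder_bx t x)).const_add (ε ^ 2)
      have hne : ε ^ 2 + (inner ℝ (b t x) (b t x) : ℝ) ≠ 0 := by
        rw [real_inner_self_eq_norm_sq]; positivity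
      have hs := hi.sqrt hne
      have hfun : (fun y => Real.sqrt (ε ^ 2 + (inner ℝ (b t y) (b t y) : ℝ)))
          = fun y => g t y := by
        funext y; rw [real_inner_self_eq_norm_sq]
      rw [hfun] at hs
      convert hs using 1
      show (inner ℝ (bx t x) (b t x) : ℝ) / g t x = _
      rw [real_inner_comm (bx t x) (b t x), real_inner_self_eq_norm_sq]
      simp only [hgdef]
      ring
    -- joint continuity of gt
    have hgtc : Continuous fun p : ℝ × ℝ => gt p.1 p.2 := by
      refine Continuous.div ?_ hgc (fun p => (hgpos p.1 p.2).ne')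
      exact hbtc.inner hBc
    -- continuity in x of ux and gx
    have huxct : ∀ t, Continuous fun x => ux t x := fun t =>
      (hutx t).continuous_deriv le_rfl
    have hbxct : ∀ t, Continuous fun x => bx t x := fun t =>
      (hbtx t).continuous_deriv le_rfl
    have hgxct : ∀ t, Continuous fun x => gx t x := fun t =>
      ((hbxct t).inner ((hbtx t).continuous)).div (hgct t) (fun x => (hgpos t x).ne')
    -- pointwise identity from the PDE
    have hkey : ∀ t, 0 ≤ t → ∀ x, gt t x
        = ux t x * (ε ^ 2 / g t x) - (ux t x * g t x + u t x * gx t x) := by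
      intro t ht x
      have hg2 := hgsq t x
      have hne : g t x ≠ 0 := (hgpos t x).ne'
      have hin : (inner ℝ (bt t x) (b t x) : ℝ)
          = -(u t x * (inner ℝ (bx t x) (b t x) : ℝ) + ux t x * ‖b t x‖ ^ 2) := by
        rw [hPDE t ht x, inner_neg_left, inner_add_left, real_inner_smul_left,
          real_inner_smul_left, real_inner_self_eq_norm_sq]
      show (inner ℝ (bt t x) (b t x) : ℝ) / g t x
          = ux t x * (ε ^ 2 / g t x)
            - (ux t x * g t x + u t x * ((inner ℝ (bx t x) (b t x) : ℝ) / g t x))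
      rw [hin]
      field_simp
      linear_combination (ux t x) * hg2
    -- FTC in space
    have hFTC : ∀ t, 0 ≤ t →
        (∫ x in (0:ℝ)..1, (ux t x * g t x + u t x * gx t x)) = 0 := by
      intro t _
      have hderH : ∀ x : ℝ, HasDerivAt (fun y => u t y * g t y)
          (ux t x * g t x + u t x * gx t x) x :=
        fun x => (hder_ux t x).mul (hder_gx t x)
      have hint : IntervalIntegrable (fun x => ux t x * g t x + u t x * gx t x)
          volume 0 1 :=
        (((huxct t).mul (hgct t)).add
          ((hutx t).continuous.mul (hgxct t))).intervalIntegrable 0 1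
      have heq := intervalIntegral.integral_eq_sub_of_hasDerivAt
        (f := fun y => u t y * g t y) (fun x _ => hderH x) hint
      rw [heq]
      have hu1 : u t 1 = u t 0 := by simpa using huper t 0
      have hb1 : b t 1 = b t 0 := by simpa using hbper t 0
      simp only [hgdef]
      rw [hu1, hb1]
      exact sub_self _
    -- differentiation under the integral sign
    have hbtct : ∀ t, Continuous fun x : ℝ => bt t x := fun t =>
      hbtc.comp (continuous_const.prodMk continuous_id)
    have hgtct : ∀ t, Continuous fun x : ℝ => gt t x := fun t =>
      ((hbtct t).inner (hbtx t).continuous).div (hgct t) (fun x => (hgpos t x).ne')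
    have hFder : ∀ t₀ : ℝ, HasDerivAt (fun t => ∫ x in (0:ℝ)..1, g t x)
        (∫ x in (0:ℝ)..1, gt t₀ x) t₀ := by
      intro t₀
      obtain ⟨C₀, hC₀⟩ := ((isCompact_Icc (a := t₀ - 1) (b := t₀ + 1)).prod
          (isCompact_Icc (a := (0:ℝ)) (b := 1))).exists_bound_of_continuousOn
          (f := fun p : ℝ × ℝ => gt p.1 p.2) hgtc.continuousOn
      have main := intervalIntegral.hasDerivAt_integral_of_dominated_loc_of_deriv_le
        (F := fun t x => g t x) (F' := fun t x => gt t x) (x₀ := t₀) (a := (0:ℝ)) (b := 1)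
        (bound := fun _ => C₀) (μ := volume) (Metric.ball_mem_nhds t₀ one_pos)
        (Filter.Eventually.of_forall fun s => ((hgct s).aestronglyMeasurable).restrict)
        ((hgct t₀).intervalIntegrable 0 1)
        ((hgtct t₀).aestronglyMeasurable.restrict)
        (Filter.Eventually.of_forall fun x hx s hs => by
          rw [Metric.mem_ball, Real.dist_eq] at hs
          rw [uIoc_of_le (zero_le_one' ℝ)] at hx
          have hs' : |s - t₀| < 1 := hs
          rw [abs_lt] at hs'
          exact hC₀ (s, x)
            ⟨⟨by linarith, by linarith⟩, ⟨hx.1.le, hx.2⟩⟩)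
        intervalIntegrable_const
        (Filter.Eventually.of_forall fun x _ s _ => hder_gt s x)
      exact main.2
    -- bound on the derivative
    have hDb : ∀ t ∈ Icc (0:ℝ) T, |∫ x in (0:ℝ)..1, gt t x| ≤ ε * M := by
      intro t ht
      have hint1 : IntervalIntegrable (fun x => ux t x * (ε ^ 2 / g t x)) volume 0 1 :=
        ((huxct t).mul (continuous_const.div (hgct t)
          (fun x => (hgpos t x).ne'))).intervalIntegrable 0 1
      have hint2 : IntervalIntegrable (fun x => ux t x * g t x + u t x * gx t x)
          volume 0 1 :=
        (((huxct t).mul (hgct t)).add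
          ((hutx t).continuous.mul (hgxct t))).intervalIntegrable 0 1
      have h1 : (∫ x in (0:ℝ)..1, gt t x)
          = (∫ x in (0:ℝ)..1, ux t x * (ε ^ 2 / g t x))
            - ∫ x in (0:ℝ)..1, (ux t x * g t x + u t x * gx t x) := by
        rw [← intervalIntegral.integral_sub hint1 hint2]
        exact intervalIntegral.integral_congr (fun x _ => hkey t ht.1 x)
      rw [h1, hFTC t ht.1, sub_zero]
      have hb1 := intervalIntegral.norm_integral_le_of_norm_le_const
        (C := ε * M) (f := fun x => ux t x * (ε ^ 2 / g t x)) (a := (0:ℝ)) (b := 1)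
        (fun x hx => by
          rw [uIoc_of_le (zero_le_one' ℝ)] at hx
          have hx' : x ∈ Icc (0:ℝ) 1 := ⟨hx.1.le, hx.2⟩
          have h2 := huxM t ht x hx'
          have h3 : ε ^ 2 / g t x ≤ ε := by
            rw [div_le_iff₀ (hgpos t x)]
            nlinarith [hge t x]
          have h4 : (0:ℝ) ≤ ε ^ 2 / g t x := by positivity
          rw [Real.norm_eq_abs, abs_mul, abs_of_nonneg h4]
          calc |ux t x| * (ε ^ 2 / g t x) ≤ M * ε := mul_le_mul h2 h3 h4 hMnn
            _ = ε * M := mul_comm _ _)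
      simpa using hb1
    -- mean value inequality
    have hmvt : |(∫ x in (0:ℝ)..1, g T x) - ∫ x in (0:ℝ)..1, g 0 x| ≤ ε * M * T := by
      have := norm_image_sub_le_of_norm_deriv_le_segment'
        (f := fun t => ∫ x in (0:ℝ)..1, g t x) (f' := fun t => ∫ x in (0:ℝ)..1, gt t x)
        (C := ε * M) (fun t _ => (hFder t).hasDerivWithinAt)
        (fun t ht' => by simpa using hDb t (Ico_subset_Icc_self ht'))
        T (right_mem_Icc.2 hT)
      simpa using this
    -- comparison of ∫ g and ∫ ‖b‖
    have hcmp : ∀ t : ℝ, |(∫ x in (0:ℝ)..1, g t x) - ∫ x in (0:ℝ)..1, ‖b t x‖| ≤ ε := by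
      intro t
      have hint1 : IntervalIntegrable (fun x => g t x) volume 0 1 :=
        (hgct t).intervalIntegrable 0 1
      have hint2 : IntervalIntegrable (fun x => ‖b t x‖) volume 0 1 :=
        ((hbtx t).continuous.norm).intervalIntegrable 0 1
      rw [← intervalIntegral.integral_sub hint1 hint2]
      have h1 : (∫ x in (0:ℝ)..1, (g t x - ‖b t x‖)) ≤ ∫ _ in (0:ℝ)..1, ε := by
        refine intervalIntegral.integral_mono_on zero_le_one (hint1.sub hint2)
          intervalIntegrable_const (fun x _ => by linarith [hgle t x])
      have h2 : (0:ℝ) ≤ ∫ x in (0:ℝ)..1, (g t x - ‖b t x‖) :=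
        intervalIntegral.integral_nonneg zero_le_one (fun x _ => by linarith [hnle t x])
      rw [abs_le]
      constructor
      · linarith
      · simpa using h1
    -- combine
    have h1 := hcmp T
    have h2 := hcmp 0
    rw [abs_le] at h1 h2 hmvt ⊢
    constructor <;> nlinarith
  -- conclude by letting ε → 0
  have hC : (0:ℝ) < 2 + M * T := by nlinarith
  have habs : ∀ δ : ℝ, 0 < δ →
      |(∫ x in (0:ℝ)..1, ‖b T x‖) - ∫ x in (0:ℝ)..1, ‖b 0 x‖| ≤ δ := by
    intro δ hδ
    have := key (δ / (2 + M * T)) (by positivity)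
    rwa [div_mul_cancel₀ _ hC.ne'] at this
  have h0 : |(∫ x in (0:ℝ)..1, ‖b T x‖) - ∫ x in (0:ℝ)..1, ‖b 0 x‖| ≤ 0 := by
    refine le_of_forall_pos_le_add (fun δ hδ => ?_)
    simpa using habs δ hδ
  have := abs_nonpos_iff.mp h0
  linarith [sub_eq_zero.mp this]
end

section
/- Let b be a C¹ solution on [0,∞) × 𝕋 of ∂_t b + ∂_x(u b) = 0, ∂_x u = (1/2)(|b|² − ∫ |b|²), with initial datum b₀ not identically zero. Then ψ := ∂_x u satisfies the differential inequality (1/2) d/dt ∫_𝕋 ψ² + (1/4) ‖b₀‖_{L¹}² ∫_𝕋 ψ² ≤ 0, and hence ∫_𝕋 ψ²(t,x) dx ≤ ‖ψ(0,·)‖_{L²}² exp(−(‖b₀‖_{L¹}²/2) t) for all t ≥ 0. -/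
open MeasureTheory Real Set

set_option linter.unusedSectionVars false

open MeasureTheory Real Set Metric intervalIntegral RealInnerProductSpace

noncomputable section

abbrev E2 := EuclideanSpace ℝ (Fin 2)

def Bf (b : ℝ → ℝ → E2) (t x : ℝ) : ℝ := ‖b t x‖ ^ 2
def btd (b : ℝ → ℝ → E2) (t x : ℝ) : E2 := fderiv ℝ (fun p : ℝ × ℝ => b p.1 p.2) (t, x) (1, 0)
def bxd (b : ℝ → ℝ → E2) (t x : ℝ) : E2 := fderiv ℝ (fun p : ℝ × ℝ => b p.1 p.2) (t, x) (0, 1)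
def Btf (b : ℝ → ℝ → E2) (t x : ℝ) : ℝ := 2 * ⟪b t x, btd b t x⟫
def Bxf (b : ℝ → ℝ → E2) (t x : ℝ) : ℝ := 2 * ⟪b t x, bxd b t x⟫
def cf (b : ℝ → ℝ → E2) (t : ℝ) : ℝ := ∫ y in (0:ℝ)..1, Bf b t y
def psif (b : ℝ → ℝ → E2) (t x : ℝ) : ℝ := (1/2) * (Bf b t x - cf b t)
def Ef (b : ℝ → ℝ → E2) (t : ℝ) : ℝ := ∫ x in (0:ℝ)..1, (psif b t x) ^ 2
def psitf (b : ℝ → ℝ → E2) (t x : ℝ) : ℝ :=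
  (1/2) * (Btf b t x - ∫ y in (0:ℝ)..1, Btf b t y)
def Ederiv (b : ℝ → ℝ → E2) (t : ℝ) : ℝ :=
  ∫ x in (0:ℝ)..1, 2 * psif b t x * psitf b t x

end

section
variable {E : Type*} [NormedAddCommGroup E] [NormedSpace ℝ E]

lemma pd_fst (f : ℝ → ℝ → E) (hf : ContDiff ℝ 1 (fun p : ℝ × ℝ => f p.1 p.2)) (t x : ℝ) :
    HasDerivAt (fun s => f s x) (fderiv ℝ (fun p : ℝ × ℝ => f p.1 p.2) (t, x) (1, 0)) t := by
  have h := (hf.differentiable one_ne_zero (t, x)).hasFDerivAt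
  exact h.comp_hasDerivAt t ((hasDerivAt_id t).prodMk (hasDerivAt_const t x))

lemma pd_snd (f : ℝ → ℝ → E) (hf : ContDiff ℝ 1 (fun p : ℝ × ℝ => f p.1 p.2)) (t x : ℝ) :
    HasDerivAt (fun y => f t y) (fderiv ℝ (fun p : ℝ × ℝ => f p.1 p.2) (t, x) (0, 1)) x := by
  have h := (hf.differentiable one_ne_zero (t, x)).hasFDerivAt
  exact h.comp_hasDerivAt x ((hasDerivAt_const x t).prodMk (hasDerivAt_id x))

lemma pd_cont (f : ℝ → ℝ → E) (hf : ContDiff ℝ 1 (fun p : ℝ × ℝ => f p.1 p.2)) (v : ℝ × ℝ) :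
    Continuous (fun p : ℝ × ℝ => fderiv ℝ (fun p : ℝ × ℝ => f p.1 p.2) p v) :=
  (hf.continuous_fderiv_apply one_ne_zero).comp (continuous_id.prodMk continuous_const)

/-- Continuity of a parametric interval integral. -/
lemma cont_param (F : ℝ → ℝ → E) (hF : Continuous fun p : ℝ × ℝ => F p.1 p.2) :
    Continuous fun t => ∫ x in (0:ℝ)..1, F t x := by
  have : ∀ t, ∫ x in (0:ℝ)..1, F t x = ∫ x in Icc (0:ℝ) 1, F t x := fun t => by
    rw [intervalIntegral.integral_of_le (by norm_num : (0:ℝ) ≤ 1),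
      MeasureTheory.integral_Icc_eq_integral_Ioc]
  simp only [this]
  exact continuous_parametric_integral_of_continuous (f := F) hF isCompact_Icc

/-- Differentiation under the interval integral for jointly continuous data. -/
lemma hasDerivAt_param (F F' : ℝ → ℝ → E)
    (hF : Continuous fun p : ℝ × ℝ => F p.1 p.2)
    (hF' : Continuous fun p : ℝ × ℝ => F' p.1 p.2)
    (hd : ∀ s x, HasDerivAt (fun s => F s x) (F' s x) s) (t : ℝ) :
    HasDerivAt (fun s => ∫ x in (0:ℝ)..1, F s x) (∫ x in (0:ℝ)..1, F' t x) t := by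
  obtain ⟨C, hC⟩ := ((isCompact_Icc (a := t - 1) (b := t + 1)).prod
    (isCompact_Icc (a := (0:ℝ)) (b := 1))).exists_bound_of_continuousOn hF'.continuousOn
  have key := intervalIntegral.hasDerivAt_integral_of_dominated_loc_of_deriv_le
    (F := fun s x => F s x) (F' := fun s x => F' s x) (x₀ := t) (a := 0) (b := 1)
    (μ := volume) (bound := fun _ => C) (s := ball t 1) (ball_mem_nhds t one_pos)
    (Filter.Eventually.of_forall fun s =>
      ((hF.comp (continuous_const.prodMk continuous_id)).aestronglyMeasurable))
    ((hF.comp (continuous_const.prodMk continuous_id)).intervalIntegrable 0 1)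
    ((hF'.comp (continuous_const.prodMk continuous_id)).aestronglyMeasurable)
    (by
      refine Filter.Eventually.of_forall fun x hx s hs => ?_
      refine hC (s, x) ⟨?_, ?_⟩
      · have h1 := mem_ball_iff_norm.1 hs
        rw [Real.norm_eq_abs] at h1
        constructor <;> [linarith [neg_le_of_abs_le h1.le]; linarith [le_of_abs_le h1.le]]
      · have : x ∈ Set.Ioc (0:ℝ) 1 := by
          simpa [Set.uIoc_of_le (by norm_num : (0:ℝ) ≤ 1)] using hx
        exact ⟨le_of_lt this.1, this.2⟩)
    intervalIntegrable_const
    (Filter.Eventually.of_forall fun x _ s _ => hd s x)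
  exact key.2
end

section Core
variable (b : ℝ → ℝ → E2) (hb : ContDiff ℝ 1 (fun p : ℝ × ℝ => b p.1 p.2))
include hb

lemma contB : Continuous fun p : ℝ × ℝ => Bf b p.1 p.2 := by
  have := hb.continuous
  unfold Bf; fun_prop

lemma contBt : Continuous fun p : ℝ × ℝ => Btf b p.1 p.2 := by
  have h1 := hb.continuous
  have h2 := pd_cont _ hb (1, 0)
  unfold Btf btd
  exact continuous_const.mul (h1.inner h2)

lemma contBx : Continuous fun p : ℝ × ℝ => Bxf b p.1 p.2 := by
  have h1 := hb.continuous
  have h2 := pd_cont _ hb (0, 1)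
  unfold Bxf bxd
  exact continuous_const.mul (h1.inner h2)

lemma hasDerivAt_B_t (t x : ℝ) : HasDerivAt (fun s => Bf b s x) (Btf b t x) t := by
  have h := ((pd_fst b hb t x).inner ℝ (pd_fst b hb t x))
  have : Bf b = fun t x => ⟪b t x, b t x⟫ := by
    funext t x; rw [real_inner_self_eq_norm_sq]; rfl
  rw [this]
  exact h.congr_deriv (by unfold Btf btd; rw [real_inner_comm]; ring)

lemma hasDerivAt_B_x (t x : ℝ) : HasDerivAt (fun y => Bf b t y) (Bxf b t x) x := by
  have h := ((pd_snd b hb t x).inner ℝ (pd_snd b hb t x))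
  have : Bf b = fun t x => ⟪b t x, b t x⟫ := by
    funext t x; rw [real_inner_self_eq_norm_sq]; rfl
  rw [this]
  exact h.congr_deriv (by unfold Bxf bxd; rw [real_inner_comm]; ring)

lemma contc : Continuous (cf b) := cont_param _ (contB b hb)

lemma hasDerivAt_c (t : ℝ) :
    HasDerivAt (cf b) (∫ y in (0:ℝ)..1, Btf b t y) t :=
  hasDerivAt_param _ _ (contB b hb) (contBt b hb) (fun s x => hasDerivAt_B_t b hb s x) t

lemma contpsi : Continuous fun p : ℝ × ℝ => psif b p.1 p.2 := by
  have h1 := contB b hb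
  have h2 := (contc b hb).comp (continuous_fst : Continuous fun p : ℝ × ℝ => p.1)
  unfold psif
  exact continuous_const.mul (h1.sub h2)

lemma contpsit : Continuous fun p : ℝ × ℝ => psitf b p.1 p.2 := by
  have h1 := contBt b hb
  have h2 := (cont_param _ (contBt b hb)).comp (continuous_fst : Continuous fun p : ℝ × ℝ => p.1)
  unfold psitf
  exact continuous_const.mul (h1.sub h2)

lemma hasDerivAt_psi_t (t x : ℝ) : HasDerivAt (fun s => psif b s x) (psitf b t x) t := by
  unfold psif psitf
  exact (((hasDerivAt_B_t b hb t x).sub (hasDerivAt_c b hb t)).const_mul (1/2))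

lemma hasDerivAt_psi_x (t x : ℝ) :
    HasDerivAt (fun y => psif b t y) ((1/2) * Bxf b t x) x := by
  unfold psif
  have := (((hasDerivAt_B_x b hb t x).sub (hasDerivAt_const x (cf b t))).const_mul (1/2))
  simpa only [sub_zero, Pi.sub_apply] using this

lemma hasDerivAt_E (t : ℝ) : HasDerivAt (Ef b) (Ederiv b t) t := by
  unfold Ef Ederiv
  refine hasDerivAt_param (E := ℝ) (fun s x => (psif b s x) ^ 2)
    (fun s x => 2 * psif b s x * psitf b s x) ?_ ?_ (fun s x => ?_) t
  · exact (contpsi b hb).pow 2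
  · exact (continuous_const.mul (contpsi b hb)).mul (contpsit b hb)
  · exact ((hasDerivAt_psi_t b hb s x).pow 2).congr_deriv (by simp [mul_comm, mul_assoc, mul_left_comm])

end Core

section PDE
variable (b : ℝ → ℝ → E2) (u : ℝ → ℝ → ℝ)
  (hb : ContDiff ℝ 1 (fun p : ℝ × ℝ => b p.1 p.2))
  (hu : ContDiff ℝ 1 (fun p : ℝ × ℝ => u p.1 p.2))
  (hbper : ∀ t x, b t (x + 1) = b t x)
  (huper : ∀ t x, u t (x + 1) = u t x)
  (hux : ∀ t, 0 ≤ t → ∀ x, deriv (fun y => u t y) x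
      = (1 / 2) * (‖b t x‖ ^ 2 - ∫ y in (0:ℝ)..1, ‖b t y‖ ^ 2))
  (hpde : ∀ t, 0 ≤ t → ∀ x,
      deriv (fun s => b s x) t + deriv (fun y => u t y • b t y) x = 0)

-- continuity in x at fixed time, and integrability
lemma contx {E : Type*} [NormedAddCommGroup E] [NormedSpace ℝ E] {F : ℝ → ℝ → E}
    (hF : Continuous fun p : ℝ × ℝ => F p.1 p.2) (t : ℝ) : Continuous fun x => F t x :=
  hF.comp (continuous_const.prodMk continuous_id)

include hux hb in
lemma deriv_u_eq (t : ℝ) (ht : 0 ≤ t) (x : ℝ) :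
    deriv (fun y => u t y) x = psif b t x := by
  rw [hux t ht x]; rfl

include hu hux hb in
lemma hasDerivAt_u (t : ℝ) (ht : 0 ≤ t) (x : ℝ) :
    HasDerivAt (fun y => u t y) (psif b t x) x := by
  have h := pd_snd u hu t x
  have e : fderiv ℝ (fun p : ℝ × ℝ => u p.1 p.2) (t, x) (0, 1) = psif b t x := by
    rw [← h.deriv]; exact deriv_u_eq b u hb hux t ht x
  rwa [e] at h

include hu hux hpde hb in
lemma bt_eq (t : ℝ) (ht : 0 ≤ t) (x : ℝ) :
    btd b t x = -(psif b t x • b t x) - u t x • bxd b t x := by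
  have h1 := pd_fst b hb t x
  have h2 := (hasDerivAt_u b u hb hu hux t ht x).smul (pd_snd b hb t x)
  have hp := hpde t ht x
  rw [h1.deriv, show (fun y => u t y • b t y) = ((fun y => u t y) • fun y => b t y) from rfl,
    h2.deriv] at hp
  unfold btd bxd
  have := hp
  rw [add_eq_zero_iff_eq_neg] at this
  rw [this]
  abel

include hu hux hpde hb in
lemma Bt_eq (t : ℝ) (ht : 0 ≤ t) (x : ℝ) :
    Btf b t x = -2 * psif b t x * Bf b t x - u t x * Bxf b t x := by
  unfold Btf
  rw [bt_eq b u hb hu hux hpde t ht x]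
  rw [inner_sub_right, inner_neg_right, inner_smul_right, inner_smul_right]
  unfold Bf Bxf
  rw [← real_inner_self_eq_norm_sq]
  ring

-- periodicity of pointwise quantities
include hbper in
lemma Bper (t x : ℝ) : Bf b t (x + 1) = Bf b t x := by unfold Bf; rw [hbper]

include hbper in
lemma psiper (t x : ℝ) : psif b t (x + 1) = psif b t x := by
  unfold psif; rw [Bper b hbper]

/-- FTC: the integral of a derivative of a 1-periodic function vanishes. -/
lemma integral_deriv_periodic (g g' : ℝ → ℝ) (hg : ∀ x, HasDerivAt g (g' x) x)
    (hgc : Continuous g') (hper : g 1 = g 0) : ∫ x in (0:ℝ)..1, g' x = 0 := by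
  rw [intervalIntegral.integral_eq_sub_of_hasDerivAt (fun x _ => hg x)
    (hgc.intervalIntegrable 0 1), hper, sub_self]

include hb hu hbper huper hux in
lemma int_psi (t : ℝ) (ht : 0 ≤ t) : ∫ x in (0:ℝ)..1, psif b t x = 0 := by
  refine integral_deriv_periodic (fun x => u t x) _
    (fun x => hasDerivAt_u b u hb hu hux t ht x)
    (contx (contpsi b hb) t) ?_
  simpa using huper t 0

include hb hu hbper huper hux in
lemma int_parts1 (t : ℝ) (ht : 0 ≤ t) :
    ∫ x in (0:ℝ)..1, (psif b t x * Bf b t x + u t x * Bxf b t x) = 0 := by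
  refine integral_deriv_periodic (fun x => u t x * Bf b t x) _ (fun x => ?_) ?_ ?_
  · exact (hasDerivAt_u b u hb hu hux t ht x).mul (hasDerivAt_B_x b hb t x)
  · exact ((contx (contpsi b hb) t).mul (contx (contB b hb) t)).add
      ((contx hu.continuous t).mul (contx (contBx b hb) t))
  · show u t 1 * Bf b t 1 = u t 0 * Bf b t 0
    rw [show (1:ℝ) = 0 + 1 by norm_num, huper, Bper b hbper]

include hb hu hbper huper hux in
lemma int_parts2 (t : ℝ) (ht : 0 ≤ t) :
    ∫ x in (0:ℝ)..1, (psif b t x ^ 3 + u t x * (psif b t x * Bxf b t x)) = 0 := by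
  refine integral_deriv_periodic (fun x => u t x * (psif b t x) ^ 2) _ (fun x => ?_) ?_ ?_
  · have h := (hasDerivAt_u b u hb hu hux t ht x).mul ((hasDerivAt_psi_x b hb t x).pow 2)
    exact h.congr_deriv (by simp only [Pi.pow_apply]; push_cast; ring)
  · refine ((contx (contpsi b hb) t).pow 3).add
      ((contx hu.continuous t).mul (((contx (contpsi b hb) t)).mul (contx (contBx b hb) t)))
  · show u t 1 * psif b t 1 ^ 2 = u t 0 * psif b t 0 ^ 2
    rw [show (1:ℝ) = 0 + 1 by norm_num, huper, psiper b hbper]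

end PDE
section PDE2
variable (b : ℝ → ℝ → E2) (u : ℝ → ℝ → ℝ)
  (hb : ContDiff ℝ 1 (fun p : ℝ × ℝ => b p.1 p.2))
  (hu : ContDiff ℝ 1 (fun p : ℝ × ℝ => u p.1 p.2))
  (hbper : ∀ t x, b t (x + 1) = b t x)
  (huper : ∀ t x, u t (x + 1) = u t x)
  (hux : ∀ t, 0 ≤ t → ∀ x, deriv (fun y => u t y) x
      = (1 / 2) * (‖b t x‖ ^ 2 - ∫ y in (0:ℝ)..1, ‖b t y‖ ^ 2))
  (hpde : ∀ t, 0 ≤ t → ∀ x,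
      deriv (fun s => b s x) t + deriv (fun y => u t y • b t y) x = 0)

include hb hu hbper huper hux hpde in
lemma Ederiv_eq (t : ℝ) (ht : 0 ≤ t) :
    Ederiv b t = -(3/2) * (∫ x in (0:ℝ)..1, psif b t x ^ 2 * Bf b t x)
      - (1/2) * cf b t * Ef b t := by
  set k : ℝ := ∫ y in (0:ℝ)..1, Btf b t y with hk
  have hcψ : Continuous fun x => psif b t x := contx (contpsi b hb) t
  have hcB : Continuous fun x => Bf b t x := contx (contB b hb) t
  have hcBx : Continuous fun x => Bxf b t x := contx (contBx b hb) t
  have hcu : Continuous fun x => u t x := contx hu.continuous t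
  have e1 : ∀ x, 2 * psif b t x * psitf b t x =
      (-(3/2)) * (psif b t x ^ 2 * Bf b t x) + (-(1/2) * cf b t) * psif b t x ^ 2
      + (-1) * (psif b t x ^ 3 + u t x * (psif b t x * Bxf b t x)) + (-k) * psif b t x := by
    intro x
    have hψt : psitf b t x = 1/2 * (Btf b t x - k) := rfl
    have hBt := Bt_eq b u hb hu hux hpde t ht x
    have hψ : psif b t x = 1/2 * (Bf b t x - cf b t) := rfl
    rw [hψt, hBt, hψ]; ring
  have i1 : IntervalIntegrable (fun x => (-(3/2)) * (psif b t x ^ 2 * Bf b t x))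
      MeasureTheory.volume 0 1 := (by fun_prop : Continuous _).intervalIntegrable 0 1
  have i2 : IntervalIntegrable (fun x => (-(1/2) * cf b t) * psif b t x ^ 2)
      MeasureTheory.volume 0 1 := (by fun_prop : Continuous _).intervalIntegrable 0 1
  have i3 : IntervalIntegrable
      (fun x => (-1 : ℝ) * (psif b t x ^ 3 + u t x * (psif b t x * Bxf b t x)))
      MeasureTheory.volume 0 1 := (by fun_prop : Continuous _).intervalIntegrable 0 1
  have i4 : IntervalIntegrable (fun x => (-k) * psif b t x)
      MeasureTheory.volume 0 1 := (by fun_prop : Continuous _).intervalIntegrable 0 1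
  have : Ederiv b t =
      (∫ x in (0:ℝ)..1, (-(3/2)) * (psif b t x ^ 2 * Bf b t x))
      + (∫ x in (0:ℝ)..1, (-(1/2) * cf b t) * psif b t x ^ 2)
      + (∫ x in (0:ℝ)..1,
          (-1 : ℝ) * (psif b t x ^ 3 + u t x * (psif b t x * Bxf b t x)))
      + (∫ x in (0:ℝ)..1, (-k) * psif b t x) := by
    unfold Ederiv
    rw [intervalIntegral.integral_congr (g :=
      fun x => (-(3/2)) * (psif b t x ^ 2 * Bf b t x) + (-(1/2) * cf b t) * psif b t x ^ 2
      + (-1) * (psif b t x ^ 3 + u t x * (psif b t x * Bxf b t x)) + (-k) * psif b t x)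
      (fun x _ => e1 x)]
    rw [intervalIntegral.integral_add ((i1.add i2).add i3) i4,
      intervalIntegral.integral_add (i1.add i2) i3,
      intervalIntegral.integral_add i1 i2]
  rw [this]
  rw [intervalIntegral.integral_const_mul, intervalIntegral.integral_const_mul,
    intervalIntegral.integral_const_mul, intervalIntegral.integral_const_mul,
    int_psi b u hb hu hbper huper hux t ht,
    int_parts2 b u hb hu hbper huper hux t ht]
  unfold Ef
  ring

end PDE2
noncomputable def gf (b : ℝ → ℝ → E2) (ε t x : ℝ) : ℝ := Real.sqrt (Bf b t x + ε ^ 2)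

section Cons
variable (b : ℝ → ℝ → E2) (u : ℝ → ℝ → ℝ)
  (hb : ContDiff ℝ 1 (fun p : ℝ × ℝ => b p.1 p.2))
  (hu : ContDiff ℝ 1 (fun p : ℝ × ℝ => u p.1 p.2))
  (hbper : ∀ t x, b t (x + 1) = b t x)
  (huper : ∀ t x, u t (x + 1) = u t x)
  (hux : ∀ t, 0 ≤ t → ∀ x, deriv (fun y => u t y) x
      = (1 / 2) * (‖b t x‖ ^ 2 - ∫ y in (0:ℝ)..1, ‖b t y‖ ^ 2))
  (hpde : ∀ t, 0 ≤ t → ∀ x,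
      deriv (fun s => b s x) t + deriv (fun y => u t y • b t y) x = 0)
  {ε : ℝ} (hε : 0 < ε)

lemma Bf_nonneg (t x : ℝ) : 0 ≤ Bf b t x := by unfold Bf; positivity

include hε in
lemma g_pos (t x : ℝ) : ε ≤ gf b ε t x := by
  have h1 : ε ^ 2 ≤ Bf b t x + ε ^ 2 := by linarith [Bf_nonneg b t x]
  calc ε = Real.sqrt (ε ^ 2) := (Real.sqrt_sq hε.le).symm
    _ ≤ _ := Real.sqrt_le_sqrt h1

include hε in
lemma g_sq (t x : ℝ) : gf b ε t x ^ 2 = Bf b t x + ε ^ 2 :=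
  Real.sq_sqrt (by have := Bf_nonneg b t x; positivity : (0:ℝ) ≤ Bf b t x + ε ^ 2)

include hb hε in
lemma contg : Continuous fun p : ℝ × ℝ => gf b ε p.1 p.2 := by
  have := contB b hb
  unfold gf; fun_prop

include hb hε in
lemma contgt : Continuous fun p : ℝ × ℝ => Btf b p.1 p.2 / (2 * gf b ε p.1 p.2) :=
  (contBt b hb).div (continuous_const.mul (contg b hb hε))
    (fun p => by have := lt_of_lt_of_le hε (g_pos b hε p.1 p.2); positivity)

include hb hε in
lemma hasDerivAt_g_t (t x : ℝ) :
    HasDerivAt (fun s => gf b ε s x) (Btf b t x / (2 * gf b ε t x)) t := by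
  have h := ((hasDerivAt_B_t b hb t x).add_const (ε ^ 2)).sqrt
    (by have := Bf_nonneg b t x; positivity : Bf b t x + ε ^ 2 ≠ 0)
  exact h

include hb hε in
lemma hasDerivAt_g_x (t x : ℝ) :
    HasDerivAt (fun y => gf b ε t y) (Bxf b t x / (2 * gf b ε t x)) x := by
  have h := ((hasDerivAt_B_x b hb t x).add_const (ε ^ 2)).sqrt
    (by have := Bf_nonneg b t x; positivity : Bf b t x + ε ^ 2 ≠ 0)
  exact h

include hb hε in
lemma hasDerivAt_h (t : ℝ) :
    HasDerivAt (fun s => ∫ x in (0:ℝ)..1, gf b ε s x)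
      (∫ x in (0:ℝ)..1, Btf b t x / (2 * gf b ε t x)) t :=
  hasDerivAt_param _ _ (contg b hb hε) (contgt b hb hε)
    (fun s x => hasDerivAt_g_t b hb hε s x) t

include hb hu hbper huper hux hε in
lemma int_parts_g (t : ℝ) (ht : 0 ≤ t) :
    ∫ x in (0:ℝ)..1,
      (psif b t x * gf b ε t x + u t x * (Bxf b t x / (2 * gf b ε t x))) = 0 := by
  refine integral_deriv_periodic (fun x => u t x * gf b ε t x) _ (fun x => ?_) ?_ ?_
  · exact (hasDerivAt_u b u hb hu hux t ht x).mul (hasDerivAt_g_x b hb hε t x)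
  · have h1 : Continuous fun x : ℝ => gf b ε t x := contx (contg b hb hε) t
    have h2 : Continuous fun x : ℝ => Bxf b t x / (2 * gf b ε t x) :=
      (contx (contBx b hb) t).div (continuous_const.mul h1)
        (fun x => by have := lt_of_lt_of_le hε (g_pos b hε t x); positivity)
    exact ((contx (contpsi b hb) t).mul h1).add ((contx hu.continuous t).mul h2)
  · show u t 1 * gf b ε t 1 = u t 0 * gf b ε t 0
    have e1 : gf b ε t 1 = gf b ε t 0 := by
      unfold gf; rw [show (1:ℝ) = 0 + 1 by norm_num, Bper b hbper]
    have e2 : u t 1 = u t 0 := by rw [show (1:ℝ) = 0 + 1 by norm_num, huper]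
    rw [e1, e2]

include hb hu hbper huper hux hpde hε in
lemma Dval (t : ℝ) (ht : 0 ≤ t) :
    (∫ x in (0:ℝ)..1, Btf b t x / (2 * gf b ε t x))
      = ∫ x in (0:ℝ)..1, psif b t x * (ε ^ 2 / gf b ε t x) := by
  have hgpos : ∀ x, 0 < gf b ε t x := fun x => lt_of_lt_of_le hε (g_pos b hε t x)
  have e1 : ∀ x, Btf b t x / (2 * gf b ε t x)
      = psif b t x * (ε ^ 2 / gf b ε t x)
        - (psif b t x * gf b ε t x + u t x * (Bxf b t x / (2 * gf b ε t x))) := by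
    intro x
    have hBt := Bt_eq b u hb hu hux hpde t ht x
    have hg2 := g_sq b hε t x
    have hgne : gf b ε t x ≠ 0 := (hgpos x).ne'
    rw [hBt, show ε ^ 2 = gf b ε t x ^ 2 - Bf b t x from by linarith]
    field_simp
    ring
  rw [intervalIntegral.integral_congr (g := fun x =>
      psif b t x * (ε ^ 2 / gf b ε t x)
        - (psif b t x * gf b ε t x + u t x * (Bxf b t x / (2 * gf b ε t x))))
      (fun x _ => e1 x)]
  have hcg : Continuous fun x : ℝ => gf b ε t x := contx (contg b hb hε) t
  have hgne : ∀ x : ℝ, gf b ε t x ≠ 0 := fun x => (lt_of_lt_of_le hε (g_pos b hε t x)).ne'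
  have i1 : IntervalIntegrable (fun x => psif b t x * (ε ^ 2 / gf b ε t x))
      MeasureTheory.volume 0 1 :=
    ((contx (contpsi b hb) t).mul (continuous_const.div hcg hgne)).intervalIntegrable 0 1
  have i2 : IntervalIntegrable
      (fun x => psif b t x * gf b ε t x + u t x * (Bxf b t x / (2 * gf b ε t x)))
      MeasureTheory.volume 0 1 := by
    refine (((contx (contpsi b hb) t).mul hcg).add ((contx hu.continuous t).mul
      ((contx (contBx b hb) t).div (continuous_const.mul hcg)
        (fun x => mul_ne_zero two_ne_zero (hgne x))))).intervalIntegrable 0 1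
  rw [intervalIntegral.integral_sub i1 i2, int_parts_g b u hb hu hbper huper hux hε t ht, sub_zero]

end Cons
section Cons2
variable (b : ℝ → ℝ → E2) (u : ℝ → ℝ → ℝ)
  (hb : ContDiff ℝ 1 (fun p : ℝ × ℝ => b p.1 p.2))
  (hu : ContDiff ℝ 1 (fun p : ℝ × ℝ => u p.1 p.2))
  (hbper : ∀ t x, b t (x + 1) = b t x)
  (huper : ∀ t x, u t (x + 1) = u t x)
  (hux : ∀ t, 0 ≤ t → ∀ x, deriv (fun y => u t y) x
      = (1 / 2) * (‖b t x‖ ^ 2 - ∫ y in (0:ℝ)..1, ‖b t y‖ ^ 2))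
  (hpde : ∀ t, 0 ≤ t → ∀ x,
      deriv (fun s => b s x) t + deriv (fun y => u t y • b t y) x = 0)

include hb hu hbper huper hux hpde in
lemma conservation (T : ℝ) (hT : 0 ≤ T) :
    (∫ x in (0:ℝ)..1, ‖b T x‖) = ∫ x in (0:ℝ)..1, ‖b 0 x‖ := by
  obtain ⟨M₀, hM₀⟩ := ((isCompact_Icc (a := (0:ℝ)) (b := T)).prod
    (isCompact_Icc (a := (0:ℝ)) (b := 1))).exists_bound_of_continuousOn
    (contpsi b hb).continuousOn
  set M : ℝ := max M₀ 0 with hM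
  have hMnn : 0 ≤ M := le_max_right _ _
  have hMb : ∀ t x, t ∈ Icc 0 T → x ∈ Icc (0:ℝ) 1 → |psif b t x| ≤ M := by
    intro t x ht hx
    exact le_trans (by simpa using hM₀ (t, x) ⟨ht, hx⟩) (le_max_left _ _)
  have key : ∀ δ > 0, |(∫ x in (0:ℝ)..1, ‖b T x‖) - ∫ x in (0:ℝ)..1, ‖b 0 x‖| ≤ δ := by
    intro δ hδ
    set ε : ℝ := δ / (2 + M * T + 1) with hεdef
    have hden : (0:ℝ) < 2 + M * T + 1 := by positivity
    have hε : 0 < ε := div_pos hδ hden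
    -- the regularized mass
    set h : ℝ → ℝ := fun t => ∫ x in (0:ℝ)..1, gf b ε t x with hh
    -- derivative bound on [0, T]
    have hDbound : ∀ t ∈ Icc (0:ℝ) T,
        ‖∫ x in (0:ℝ)..1, Btf b t x / (2 * gf b ε t x)‖ ≤ M * ε := by
      intro t ht
      rw [Dval b u hb hu hbper huper hux hpde hε t ht.1]
      have := intervalIntegral.norm_integral_le_of_norm_le_const
        (C := M * ε) (f := fun x => psif b t x * (ε ^ 2 / gf b ε t x))
        (a := 0) (b := 1) ?_
      · simpa using this
      · intro x hx
        have hx' : x ∈ Icc (0:ℝ) 1 := by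
          have : x ∈ Set.Ioc (0:ℝ) 1 := by
            simpa [Set.uIoc_of_le (by norm_num : (0:ℝ) ≤ 1)] using hx
          exact ⟨this.1.le, this.2⟩
        have h1 : |psif b t x| ≤ M := hMb t x ht hx'
        have hg := g_pos b hε t x
        have hgpos : 0 < gf b ε t x := lt_of_lt_of_le hε hg
        have h2 : ε ^ 2 / gf b ε t x ≤ ε := by
          rw [div_le_iff₀ hgpos]
          nlinarith
        have h3 : 0 ≤ ε ^ 2 / gf b ε t x := by positivity
        rw [Real.norm_eq_abs, abs_mul, abs_of_nonneg h3]
        exact mul_le_mul h1 h2 h3 hMnn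
    -- MVT on [0, T]
    have hMVT : |h T - h 0| ≤ M * ε * T := by
      have := Convex.norm_image_sub_le_of_norm_hasDerivWithin_le
        (f := h) (f' := fun t => ∫ x in (0:ℝ)..1, Btf b t x / (2 * gf b ε t x))
        (s := Icc (0:ℝ) T) (C := M * ε)
        (fun t _ => (hasDerivAt_h b hb hε t).hasDerivWithinAt) hDbound
        (convex_Icc 0 T) (left_mem_Icc.2 hT) (right_mem_Icc.2 hT)
      calc |h T - h 0| = ‖h T - h 0‖ := rfl
        _ ≤ M * ε * ‖T - 0‖ := this
        _ = M * ε * T := by rw [sub_zero, Real.norm_eq_abs, abs_of_nonneg hT]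
    -- approximation of the mass
    have happrox : ∀ t : ℝ, |h t - ∫ x in (0:ℝ)..1, ‖b t x‖| ≤ ε := by
      intro t
      have hcg : Continuous fun x : ℝ => gf b ε t x := contx (contg b hb hε) t
      have hcn : Continuous fun x : ℝ => ‖b t x‖ :=
        (contx (F := fun t x => b t x) hb.continuous t).norm
      have hsub : h t - (∫ x in (0:ℝ)..1, ‖b t x‖)
          = ∫ x in (0:ℝ)..1, (gf b ε t x - ‖b t x‖) := by
        rw [intervalIntegral.integral_sub (hcg.intervalIntegrable 0 1)
          (hcn.intervalIntegrable 0 1)]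
      rw [hsub]
      have := intervalIntegral.norm_integral_le_of_norm_le_const
        (C := ε) (f := fun x => gf b ε t x - ‖b t x‖)
        (a := 0) (b := 1) ?_
      · simpa using this
      · intro x _
        have hnb : 0 ≤ ‖b t x‖ := norm_nonneg _
        have h1 : ‖b t x‖ ≤ gf b ε t x := by
          have : ‖b t x‖ = Real.sqrt (Bf b t x) := by
            unfold Bf; rw [Real.sqrt_sq hnb]
          rw [this]
          exact Real.sqrt_le_sqrt (by nlinarith)
        have h2 : gf b ε t x ≤ ‖b t x‖ + ε := by
          have : gf b ε t x ≤ Real.sqrt ((‖b t x‖ + ε) ^ 2) := by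
            apply Real.sqrt_le_sqrt
            unfold Bf
            nlinarith
          rwa [Real.sqrt_sq (by positivity)] at this
        show ‖gf b ε t x - ‖b t x‖‖ ≤ ε
        rw [Real.norm_eq_abs, abs_of_nonneg (by linarith)]
        linarith
    have total : |(∫ x in (0:ℝ)..1, ‖b T x‖) - ∫ x in (0:ℝ)..1, ‖b 0 x‖|
        ≤ ε * (2 + M * T) := by
      have h1 := happrox T
      have h2 := happrox 0
      have := abs_sub_abs_le_abs_sub (h T - h 0) 0
      calc |(∫ x in (0:ℝ)..1, ‖b T x‖) - ∫ x in (0:ℝ)..1, ‖b 0 x‖|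
          ≤ |(∫ x in (0:ℝ)..1, ‖b T x‖) - h T| + |h T - h 0| + |h 0 - ∫ x in (0:ℝ)..1, ‖b 0 x‖| := by
            have := abs_sub_le ((∫ x in (0:ℝ)..1, ‖b T x‖)) (h T) (∫ x in (0:ℝ)..1, ‖b 0 x‖)
            have := abs_sub_le (h T) (h 0) (∫ x in (0:ℝ)..1, ‖b 0 x‖)
            calc |(∫ x in (0:ℝ)..1, ‖b T x‖) - ∫ x in (0:ℝ)..1, ‖b 0 x‖|
                ≤ |(∫ x in (0:ℝ)..1, ‖b T x‖) - h T| + |h T - ∫ x in (0:ℝ)..1, ‖b 0 x‖| :=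
                  abs_sub_le _ _ _
              _ ≤ |(∫ x in (0:ℝ)..1, ‖b T x‖) - h T|
                  + (|h T - h 0| + |h 0 - ∫ x in (0:ℝ)..1, ‖b 0 x‖|) := by
                  linarith [abs_sub_le (h T) (h 0) (∫ x in (0:ℝ)..1, ‖b 0 x‖)]
              _ = _ := by ring
        _ ≤ ε + M * ε * T + ε := by
            have h1' : |(∫ x in (0:ℝ)..1, ‖b T x‖) - h T| ≤ ε := by
              rw [abs_sub_comm]; exact h1
            linarith
        _ = ε * (2 + M * T) := by ring
    calc |(∫ x in (0:ℝ)..1, ‖b T x‖) - ∫ x in (0:ℝ)..1, ‖b 0 x‖| ≤ ε * (2 + M * T) := total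
      _ ≤ ε * (2 + M * T + 1) := by nlinarith [hMnn, hT, hε.le]
      _ = δ := by rw [hεdef]; field_simp
  have h0 : |(∫ x in (0:ℝ)..1, ‖b T x‖) - ∫ x in (0:ℝ)..1, ‖b 0 x‖| ≤ 0 := by
    by_contra hcon
    push_neg at hcon
    have := key (|(∫ x in (0:ℝ)..1, ‖b T x‖) - ∫ x in (0:ℝ)..1, ‖b 0 x‖| / 2) (by linarith)
    linarith
  have := abs_nonpos_iff.1 h0
  linarith [sub_eq_zero.1 this]

end Cons2
section Final
variable (b : ℝ → ℝ → E2) (u : ℝ → ℝ → ℝ)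
  (hb : ContDiff ℝ 1 (fun p : ℝ × ℝ => b p.1 p.2))
  (hu : ContDiff ℝ 1 (fun p : ℝ × ℝ => u p.1 p.2))
  (hbper : ∀ t x, b t (x + 1) = b t x)
  (huper : ∀ t x, u t (x + 1) = u t x)
  (hux : ∀ t, 0 ≤ t → ∀ x, deriv (fun y => u t y) x
      = (1 / 2) * (‖b t x‖ ^ 2 - ∫ y in (0:ℝ)..1, ‖b t y‖ ^ 2))
  (hpde : ∀ t, 0 ≤ t → ∀ x,
      deriv (fun s => b s x) t + deriv (fun y => u t y • b t y) x = 0)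

include hb in
lemma cauchy_schwarz_c (t : ℝ) :
    (∫ x in (0:ℝ)..1, ‖b t x‖) ^ 2 ≤ cf b t := by
  set N : ℝ := ∫ x in (0:ℝ)..1, ‖b t x‖ with hN
  have hcn : Continuous fun x : ℝ => ‖b t x‖ :=
    (contx (F := fun t x => b t x) hb.continuous t).norm
  have h0 : (0:ℝ) ≤ ∫ x in (0:ℝ)..1, (‖b t x‖ - N) ^ 2 :=
    intervalIntegral.integral_nonneg (by norm_num) (fun x _ => sq_nonneg _)
  have hsplit : (∫ x in (0:ℝ)..1, (‖b t x‖ - N) ^ 2)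
      = cf b t - (2 * N) * N + N ^ 2 := by
    have e1 : ∀ x : ℝ, (‖b t x‖ - N) ^ 2 = Bf b t x - (2 * N) * ‖b t x‖ + N ^ 2 := by
      intro x; unfold Bf; ring
    rw [intervalIntegral.integral_congr (g := fun x =>
        Bf b t x - (2 * N) * ‖b t x‖ + N ^ 2) (fun x _ => e1 x)]
    have i1 : IntervalIntegrable (fun x => Bf b t x) MeasureTheory.volume 0 1 :=
      (contx (contB b hb) t).intervalIntegrable 0 1
    have i2 : IntervalIntegrable (fun x => (2 * N) * ‖b t x‖) MeasureTheory.volume 0 1 :=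
      (continuous_const.mul hcn).intervalIntegrable 0 1
    rw [intervalIntegral.integral_add (i1.sub i2) intervalIntegrable_const,
      intervalIntegral.integral_sub i1 i2, intervalIntegral.integral_const_mul,
      intervalIntegral.integral_const]
    show cf b t - 2 * N * N + (1 - 0) • N ^ 2 = _
    simp
  nlinarith [h0, hsplit]

include hb in
lemma Ef_nonneg (t : ℝ) : 0 ≤ Ef b t :=
  intervalIntegral.integral_nonneg (by norm_num) (fun x _ => sq_nonneg _)

include hb in
lemma int_psi2B_nonneg (t : ℝ) : 0 ≤ ∫ x in (0:ℝ)..1, psif b t x ^ 2 * Bf b t x :=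
  intervalIntegral.integral_nonneg (by norm_num)
    (fun x _ => mul_nonneg (sq_nonneg _) (Bf_nonneg b t x))

include hb hu hbper huper hux hpde in
lemma main_ineq (t : ℝ) (ht : 0 ≤ t) :
    (1/2) * Ederiv b t
      + (1/4) * (∫ x in (0:ℝ)..1, ‖b 0 x‖) ^ 2 * Ef b t ≤ 0 := by
  have hEd := Ederiv_eq b u hb hu hbper huper hux hpde t ht
  have hcons := conservation b u hb hu hbper huper hux hpde t ht
  have hcs := cauchy_schwarz_c b hb t
  rw [hcons] at hcs
  have h1 := int_psi2B_nonneg b hb t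
  have h2 := Ef_nonneg b hb t
  have h3 : (1/4) * (∫ x in (0:ℝ)..1, ‖b 0 x‖) ^ 2 * Ef b t
      ≤ (1/4) * cf b t * Ef b t := by nlinarith
  nlinarith [hEd]

include hb hu hbper huper hux hpde in
lemma decay (t : ℝ) (ht : 0 ≤ t) :
    Ef b t ≤ Ef b 0 * Real.exp (-((∫ x in (0:ℝ)..1, ‖b 0 x‖) ^ 2 / 2) * t) := by
  set K : ℝ := (∫ x in (0:ℝ)..1, ‖b 0 x‖) ^ 2 / 2 with hK
  set G : ℝ → ℝ := fun s => Ef b s * Real.exp (K * s) with hG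
  have hGd : ∀ s : ℝ, HasDerivAt G
      (Ederiv b s * Real.exp (K * s) + Ef b s * (Real.exp (K * s) * K)) s := by
    intro s
    exact ((hasDerivAt_E b hb s).mul (((hasDerivAt_id s).const_mul K).exp)).congr_deriv (by simp)
  have hanti : AntitoneOn G (Ici (0:ℝ)) := by
    refine antitoneOn_of_deriv_nonpos (convex_Ici 0) ?_ ?_ ?_
    · exact fun s _ => ((hGd s).differentiableAt).continuousAt.continuousWithinAt
    · intro s hs
      exact ((hGd s).differentiableAt).differentiableWithinAt
    · intro s hs
      rw [interior_Ici] at hs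
      rw [(hGd s).deriv]
      have hineq := main_ineq b u hb hu hbper huper hux hpde s (le_of_lt hs)
      have h2 := Ef_nonneg b hb s
      have hexp : 0 < Real.exp (K * s) := Real.exp_pos _
      have hsum : Ederiv b s + K * Ef b s ≤ 0 := by
        rw [hK]; nlinarith
      have := mul_le_mul_of_nonneg_right hsum hexp.le
      nlinarith
  have := hanti (self_mem_Ici) (mem_Ici.2 ht) ht
  have hG0 : G 0 = Ef b 0 := by simp [hG]
  have hGt : G t = Ef b t * Real.exp (K * t) := rfl
  rw [hG0, hGt] at this
  have hexp : 0 < Real.exp (K * t) := Real.exp_pos _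
  rw [show -((∫ x in (0:ℝ)..1, ‖b 0 x‖) ^ 2 / 2) * t = -(K * t) by rw [hK]; ring,
    Real.exp_neg]
  have h2 : Ef b t = (Ef b t * Real.exp (K * t)) * (Real.exp (K * t))⁻¹ := by
    field_simp
  rw [h2]
  exact mul_le_mul_of_nonneg_right this (inv_nonneg.2 hexp.le)
end Final

/-- For a `C¹` solution of the perfectly conducting system with
initial datum `b₀` not identically zero, `ψ := ∂ₓ u` satisfies the differential
inequality `½ d/dt ∫ ψ² + ¼ ‖b₀‖_{L¹}² ∫ ψ² ≤ 0`, and hence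
`∫ ψ²(t) ≤ ‖ψ(0,·)‖_{L²}² exp(−(‖b₀‖_{L¹}²/2) t)` for all `t ≥ 0`. -/
theorem psi_exponential_decay
    (b : ℝ → ℝ → EuclideanSpace ℝ (Fin 2)) (u : ℝ → ℝ → ℝ)
    (hb : ContDiff ℝ 1 (fun p : ℝ × ℝ => b p.1 p.2))
    (hu : ContDiff ℝ 1 (fun p : ℝ × ℝ => u p.1 p.2))
    (hbper : ∀ t x, b t (x + 1) = b t x)
    (huper : ∀ t x, u t (x + 1) = u t x)
    (hux : ∀ t, 0 ≤ t → ∀ x, deriv (fun y => u t y) x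
      = (1 / 2) * (‖b t x‖ ^ 2 - ∫ y in (0:ℝ)..1, ‖b t y‖ ^ 2))
    (hpde : ∀ t, 0 ≤ t → ∀ x,
      deriv (fun s => b s x) t + deriv (fun y => u t y • b t y) x = 0)
    (hb0 : ∃ x, b 0 x ≠ 0) :
    (∃ E' : ℝ → ℝ,
      (∀ t, 0 < t →
        HasDerivAt (fun s => ∫ x in (0:ℝ)..1, (deriv (fun y => u s y) x) ^ 2) (E' t) t) ∧
      (∀ t, 0 < t →
        (1 / 2) * E' t
          + (1 / 4) * (∫ x in (0:ℝ)..1, ‖b 0 x‖) ^ 2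
              * ∫ x in (0:ℝ)..1, (deriv (fun y => u t y) x) ^ 2 ≤ 0)) ∧
    (∀ t, 0 ≤ t →
      (∫ x in (0:ℝ)..1, (deriv (fun y => u t y) x) ^ 2)
        ≤ (∫ x in (0:ℝ)..1, (deriv (fun y => u 0 y) x) ^ 2)
            * Real.exp (-((∫ x in (0:ℝ)..1, ‖b 0 x‖) ^ 2 / 2) * t)) := by
  have hE : ∀ t, 0 ≤ t → (∫ x in (0:ℝ)..1, (deriv (fun y => u t y) x) ^ 2) = Ef b t := by
    intro t ht
    exact intervalIntegral.integral_congr (fun x _ => by rw [deriv_u_eq b u hb hux t ht x])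
  constructor
  · refine ⟨Ederiv b, fun t ht => ?_, fun t ht => ?_⟩
    · have heq : (fun s => ∫ x in (0:ℝ)..1, (deriv (fun y => u s y) x) ^ 2) =ᶠ[nhds t] Ef b := by
        filter_upwards [isOpen_Ioi.mem_nhds ht] with s hs
        exact hE s (le_of_lt hs)
      exact (hasDerivAt_E b hb t).congr_of_eventuallyEq heq
    · rw [hE t ht.le]
      exact main_ineq b u hb hu hbper huper hux hpde t ht.le
  · intro t ht
    rw [hE t ht, hE 0 le_rfl]
    exact decay b u hb hu hbper huper hux hpde t ht
end

section
/- Let c₀ > 0 and suppose f : [0,∞) → ℝ satisfies f(t) ≤ A e^{−c₀ t} + ∫₀^t e^{−c₀(t−s)} g(s) ds for all t, where g(s) ≤ 2 K f(s) e^{−c₀ s} for a constant K with 2K e^{−c₀ t} < 1 eventually. If moreover f is bounded, then f(t) ≤ C e^{−c₀ t} for some constant C > 0 depending on A, K, c₀ and sup f. -/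
open MeasureTheory Real Set

lemma aux_int_exp (c : ℝ) (hc : 0 < c) (t : ℝ) (ht : 0 ≤ t) :
    (∫ s in (0:ℝ)..t, Real.exp (-c * s)) ≤ 1 / c := by
  have h : (∫ s in (0:ℝ)..t, Real.exp (-c * s))
      = (-Real.exp (-c * t) / c) - (-Real.exp (-c * 0) / c) := by
    apply intervalIntegral.integral_eq_sub_of_hasDerivAt
    · intro x _
      have he : HasDerivAt (fun s : ℝ => Real.exp (-c * s)) (Real.exp (-c * x) * (-c)) x := by
        simpa using ((hasDerivAt_id x).const_mul (-c)).exp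
      have := (he.neg).div_const c
      convert this using 1
      · rfl
      · rfl
      · field_simp
    · exact (Real.continuous_exp.comp (continuous_const.mul continuous_id)).intervalIntegrable 0 t
  rw [h]
  have h1 : Real.exp (-c * 0) = 1 := by simp
  have h2 : 0 < Real.exp (-c * t) := Real.exp_pos _
  rw [h1]
  have heq : (-Real.exp (-c * t) / c) - (-1 / c) = (1 - Real.exp (-c * t)) / c := by ring
  rw [heq, div_le_div_iff₀ hc hc]
  nlinarith [Real.exp_pos (-c * t)]

lemma aux_int_sexp (c : ℝ) (hc : 0 < c) (t : ℝ) (ht : 0 ≤ t) :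
    (∫ s in (0:ℝ)..t, s * Real.exp (-c * s)) ≤ 1 / c ^ 2 := by
  have h : (∫ s in (0:ℝ)..t, s * Real.exp (-c * s))
      = (-(t / c + 1 / c ^ 2) * Real.exp (-c * t))
        - (-(0 / c + 1 / c ^ 2) * Real.exp (-c * 0)) := by
    apply intervalIntegral.integral_eq_sub_of_hasDerivAt
    · intro x _
      have he : HasDerivAt (fun s : ℝ => Real.exp (-c * s)) (Real.exp (-c * x) * (-c)) x := by
        simpa using ((hasDerivAt_id x).const_mul (-c)).exp
      have hl : HasDerivAt (fun s : ℝ => -(s / c + 1 / c ^ 2)) (-(1 / c)) x := by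
        have h0 : HasDerivAt (fun s : ℝ => s / c + 1 / c ^ 2) (1 / c) x := by
          have := ((hasDerivAt_id x).div_const c).add_const (1 / c ^ 2)
          simpa [one_div] using this
        exact h0.neg
      have := hl.mul he
      convert this using 1
      · rfl
      · rfl
      · field_simp
        ring
    · exact (continuous_id.mul
        (Real.continuous_exp.comp (continuous_const.mul continuous_id))).intervalIntegrable 0 t
  rw [h]
  have h2 : 0 < Real.exp (-c * t) := Real.exp_pos _
  have h3 : 0 ≤ t / c := div_nonneg ht hc.le
  have h4 : 0 < 1 / c ^ 2 := by positivity
  simp only [zero_div, zero_add, mul_zero, Real.exp_zero, mul_one]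
  nlinarith


/-- Abstract Grönwall-type bootstrap: if a bounded nonnegative
function `f` satisfies a Duhamel-type inequality
`f(t) ≤ A e^{−c₀ t} + ∫₀^t e^{−c₀(t−s)} g(s) ds` with a self-improving forcing
term `g(s) ≤ 2 K f(s) e^{−c₀ s}`, then `f` decays exponentially at rate `c₀`. -/
theorem gronwall_bootstrap_decay
    (c₀ A K B : ℝ) (hc₀ : 0 < c₀) (hK : 0 ≤ K)
    (f g : ℝ → ℝ)
    (hfc : Continuous f) (hgc : Continuous g)
    (hf0 : ∀ t, 0 ≤ t → 0 ≤ f t) (hg0 : ∀ t, 0 ≤ t → 0 ≤ g t)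
    (hfB : ∀ t, 0 ≤ t → f t ≤ B)
    (hDuhamel : ∀ t, 0 ≤ t →
      f t ≤ A * Real.exp (-c₀ * t) + ∫ s in (0:ℝ)..t, Real.exp (-c₀ * (t - s)) * g s)
    (hself : ∀ s, 0 ≤ s → g s ≤ 2 * K * f s * Real.exp (-c₀ * s)) :
    ∃ C > 0, ∀ t, 0 ≤ t → f t ≤ C * Real.exp (-c₀ * t) := by
  have hA : 0 ≤ A := by
    have := hDuhamel 0 le_rfl
    simp at this
    linarith [hf0 0 le_rfl]
  have hB : 0 ≤ B := le_trans (hf0 0 le_rfl) (hfB 0 le_rfl)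
  have hIg : ∀ t : ℝ, IntervalIntegrable (fun s => Real.exp (-c₀ * (t - s)) * g s)
      volume 0 t := fun t =>
    ((Real.continuous_exp.comp (continuous_const.mul (continuous_const.sub continuous_id))).mul
      hgc).intervalIntegrable 0 t
  -- Step 1: f t ≤ (A + 2KB t) e^{-c₀ t}
  have step1 : ∀ t, 0 ≤ t → f t ≤ (A + 2 * K * B * t) * Real.exp (-c₀ * t) := by
    intro t ht
    have hbound : (∫ s in (0:ℝ)..t, Real.exp (-c₀ * (t - s)) * g s)
        ≤ ∫ s in (0:ℝ)..t, 2 * K * B * Real.exp (-c₀ * t) := by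
      apply intervalIntegral.integral_mono_on ht (hIg t)
        (intervalIntegrable_const)
      intro s hs
      have hs0 : 0 ≤ s := hs.1
      have h1 : g s ≤ 2 * K * B * Real.exp (-c₀ * s) := by
        have := hself s hs0
        have h2 : 2 * K * f s * Real.exp (-c₀ * s) ≤ 2 * K * B * Real.exp (-c₀ * s) :=
          mul_le_mul_of_nonneg_right
            (mul_le_mul_of_nonneg_left (hfB s hs0) (by positivity))
            (Real.exp_pos _).le
        linarith
      calc Real.exp (-c₀ * (t - s)) * g s
          ≤ Real.exp (-c₀ * (t - s)) * (2 * K * B * Real.exp (-c₀ * s)) := by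
            apply mul_le_mul_of_nonneg_left h1 (Real.exp_pos _).le
        _ = 2 * K * B * Real.exp (-c₀ * t) := by
            rw [mul_comm, mul_assoc, ← Real.exp_add]; ring_nf
    rw [intervalIntegral.integral_const] at hbound
    have hD := hDuhamel t ht
    have h5 : f t ≤ A * Real.exp (-c₀ * t) + (t - 0) • (2 * K * B * Real.exp (-c₀ * t)) := by
      linarith
    rw [smul_eq_mul] at h5
    calc f t ≤ A * Real.exp (-c₀ * t) + (t - 0) * (2 * K * B * Real.exp (-c₀ * t)) := h5
      _ = (A + 2 * K * B * t) * Real.exp (-c₀ * t) := by ring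
  -- Step 2
  have key : ∀ t, 0 ≤ t → (∫ s in (0:ℝ)..t, Real.exp (-c₀ * (t - s)) * g s)
      ≤ Real.exp (-c₀ * t) * (2 * K * A / c₀ + 4 * K ^ 2 * B / c₀ ^ 2) := by
    intro t ht
    have hc1 : Continuous fun s : ℝ => Real.exp (-c₀ * s) :=
      Real.continuous_exp.comp (continuous_const.mul continuous_id)
    have hc2 : Continuous fun s : ℝ => s * Real.exp (-c₀ * s) := continuous_id.mul hc1
    have hbound : (∫ s in (0:ℝ)..t, Real.exp (-c₀ * (t - s)) * g s)
        ≤ ∫ s in (0:ℝ)..t, Real.exp (-c₀ * t) *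
            (2 * K * A * Real.exp (-c₀ * s) + 4 * K ^ 2 * B * (s * Real.exp (-c₀ * s))) := by
      apply intervalIntegral.integral_mono_on ht (hIg t)
      · exact (continuous_const.mul ((continuous_const.mul hc1).add
          (continuous_const.mul hc2))).intervalIntegrable 0 t
      intro s hs
      have hs0 : 0 ≤ s := hs.1
      have hfs := step1 s hs0
      have hgs : g s ≤ 2 * K * (A + 2 * K * B * s) * Real.exp (-c₀ * s) * Real.exp (-c₀ * s) := by
        have h1 := hself s hs0
        have h2 : 2 * K * f s * Real.exp (-c₀ * s)
            ≤ 2 * K * ((A + 2 * K * B * s) * Real.exp (-c₀ * s)) * Real.exp (-c₀ * s) :=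
          mul_le_mul_of_nonneg_right
            (mul_le_mul_of_nonneg_left hfs (by positivity)) (Real.exp_pos _).le
        calc g s ≤ _ := h1
          _ ≤ _ := h2
          _ = _ := by ring
      calc Real.exp (-c₀ * (t - s)) * g s
          ≤ Real.exp (-c₀ * (t - s)) *
              (2 * K * (A + 2 * K * B * s) * Real.exp (-c₀ * s) * Real.exp (-c₀ * s)) :=
            mul_le_mul_of_nonneg_left hgs (Real.exp_pos _).le
        _ = (Real.exp (-c₀ * (t - s)) * Real.exp (-c₀ * s)) *
              (2 * K * (A + 2 * K * B * s) * Real.exp (-c₀ * s)) := by ring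
        _ = Real.exp (-c₀ * t) * (2 * K * (A + 2 * K * B * s) * Real.exp (-c₀ * s)) := by
            rw [← Real.exp_add]; ring_nf
        _ = Real.exp (-c₀ * t) *
              (2 * K * A * Real.exp (-c₀ * s) + 4 * K ^ 2 * B * (s * Real.exp (-c₀ * s))) := by
            ring
    have heq : (∫ s in (0:ℝ)..t, Real.exp (-c₀ * t) *
          (2 * K * A * Real.exp (-c₀ * s) + 4 * K ^ 2 * B * (s * Real.exp (-c₀ * s))))
        = Real.exp (-c₀ * t) * (2 * K * A * (∫ s in (0:ℝ)..t, Real.exp (-c₀ * s))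
            + 4 * K ^ 2 * B * (∫ s in (0:ℝ)..t, s * Real.exp (-c₀ * s))) := by
      rw [intervalIntegral.integral_const_mul,
        intervalIntegral.integral_add (f := fun s => 2 * K * A * Real.exp (-c₀ * s))
          (g := fun s => 4 * K ^ 2 * B * (s * Real.exp (-c₀ * s)))
          ((continuous_const.mul hc1).intervalIntegrable 0 t)
          ((continuous_const.mul hc2).intervalIntegrable 0 t),
        intervalIntegral.integral_const_mul, intervalIntegral.integral_const_mul]
    rw [heq] at hbound
    refine hbound.trans ?_
    have e1 := aux_int_exp c₀ hc₀ t ht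
    have e2 := aux_int_sexp c₀ hc₀ t ht
    have hKA : 0 ≤ 2 * K * A := by positivity
    have hKB : 0 ≤ 4 * K ^ 2 * B := by positivity
    have : 2 * K * A * (∫ s in (0:ℝ)..t, Real.exp (-c₀ * s))
        + 4 * K ^ 2 * B * (∫ s in (0:ℝ)..t, s * Real.exp (-c₀ * s))
        ≤ 2 * K * A / c₀ + 4 * K ^ 2 * B / c₀ ^ 2 := by
      have := mul_le_mul_of_nonneg_left e1 hKA
      have := mul_le_mul_of_nonneg_left e2 hKB
      rw [div_eq_mul_one_div (2*K*A) c₀, div_eq_mul_one_div (4*K^2*B) (c₀^2)]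
      linarith
    exact mul_le_mul_of_nonneg_left this (Real.exp_pos _).le
  refine ⟨A + 2 * K * A / c₀ + 4 * K ^ 2 * B / c₀ ^ 2 + 1, by positivity, fun t ht => ?_⟩
  have h1 := hDuhamel t ht
  have h2 := key t ht
  have h3 : f t ≤ (A + 2 * K * A / c₀ + 4 * K ^ 2 * B / c₀ ^ 2) * Real.exp (-c₀ * t) := by
    nlinarith [Real.exp_pos (-c₀ * t)]
  nlinarith [Real.exp_pos (-c₀ * t)]
end

section
/- Let Γ, φ : 𝕋 → ℝ be smooth with ∂_x Γ = φ and ‖Γ‖_{L^∞} ≤ κ. Then (1/2) ∫_𝕋 φ⁴ ≤ 3 κ² ∫_𝕋 (∂_x φ)². Consequently, if θ is a smooth solution of ∂_t θ + u ∂_x θ = ∂_x²θ with ∂_x u = −(∂_x θ)² + ∫(∂_x θ)² and the oscillation of θ(t,·) stays ≤ κ ≤ 1/√3 for all t, then ∫_𝕋 (∂_x θ(t,·))² is non-increasing and the solution does not blow up in the Ḣ¹ norm. -/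
open MeasureTheory Real Set intervalIntegral

/-- Cauchy–Schwarz for interval integrals of continuous functions. -/
lemma cs_interval (p q : ℝ → ℝ) (hp : Continuous p) (hq : Continuous q) :
    (∫ x in (0:ℝ)..1, p x * q x) ^ 2
      ≤ (∫ x in (0:ℝ)..1, p x ^ 2) * ∫ x in (0:ℝ)..1, q x ^ 2 := by
  set A := ∫ x in (0:ℝ)..1, q x ^ 2 with hA
  set B := ∫ x in (0:ℝ)..1, p x * q x with hB
  set C := ∫ x in (0:ℝ)..1, p x ^ 2 with hC
  have key : ∀ t : ℝ, 0 ≤ A * (t * t) + (2 * B) * t + C := by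
    intro t
    have h1 : (∫ x in (0:ℝ)..1, (t * q x + p x) ^ 2)
        = A * (t * t) + (2 * B) * t + C := by
      have : ∀ x : ℝ, (t * q x + p x) ^ 2
          = (t * t) * q x ^ 2 + (2 * t) * (p x * q x) + p x ^ 2 := by intro x; ring
      rw [intervalIntegral.integral_congr (g := fun x =>
        (t * t) * q x ^ 2 + (2 * t) * (p x * q x) + p x ^ 2) (fun x _ => this x)]
      rw [intervalIntegral.integral_add, intervalIntegral.integral_add,
        intervalIntegral.integral_const_mul, intervalIntegral.integral_const_mul]
      · ring
      · exact (continuous_const.mul (hq.pow 2)).intervalIntegrable _ _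
      · exact (continuous_const.mul (hp.mul hq)).intervalIntegrable _ _
      · exact ((continuous_const.mul (hq.pow 2)).add (continuous_const.mul (hp.mul hq))).intervalIntegrable _ _
      · exact (hp.pow 2).intervalIntegrable _ _
    rw [← h1]
    exact intervalIntegral.integral_nonneg (by norm_num) (fun x _ => sq_nonneg _)
  have := discrim_le_zero key
  rw [discrim] at this
  nlinarith [this]

/-- derivative of a 1-periodic function is 1-periodic. -/
lemma deriv_periodic (f : ℝ → ℝ) (h : ∀ x, f (x + 1) = f x) (x : ℝ) :
    deriv f (x + 1) = deriv f x := by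
  have : (fun y => f (y + 1)) = f := funext h
  calc deriv f (x + 1) = deriv (fun y => f (y + 1)) x := (deriv_comp_add_const f 1 x).symm
  _ = deriv f x := by rw [this]

/-- Part (i): the key interpolation inequality. -/
lemma part_one (κ' : ℝ) (Γ : ℝ → ℝ) (hΓ : ContDiff ℝ 2 Γ) (hper : ∀ x, Γ (x + 1) = Γ x)
    (hbd : ∀ x, |Γ x| ≤ κ') :
    (1 / 2) * ∫ x in (0:ℝ)..1, (deriv Γ x) ^ 4
      ≤ 3 * κ' ^ 2 * ∫ x in (0:ℝ)..1, (deriv (deriv Γ) x) ^ 2 := by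
  set φ := deriv Γ with hφdef
  set ψ := deriv φ with hψdef
  have hΓd : Differentiable ℝ Γ := hΓ.differentiable (by norm_num)
  have hΓ' : ContDiff ℝ (1+1) Γ := by exact_mod_cast hΓ
  have hφc1 : ContDiff ℝ 1 φ := (contDiff_succ_iff_deriv.mp hΓ').2.2
  have hφd : Differentiable ℝ φ := hφc1.differentiable (by norm_num)
  have hΓc : Continuous Γ := hΓ.continuous
  have hφc : Continuous φ := hφd.continuous
  have hψc : Continuous ψ := hφc1.continuous_deriv (by norm_num)
  have hΓder : ∀ x, HasDerivAt Γ (φ x) x := fun x => (hΓd x).hasDerivAt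
  have hφder : ∀ x, HasDerivAt φ (ψ x) x := fun x => (hφd x).hasDerivAt
  have hφper : ∀ x, φ (x + 1) = φ x := fun x => deriv_periodic Γ hper x
  set X := ∫ x in (0:ℝ)..1, φ x ^ 4 with hX
  set Y := ∫ x in (0:ℝ)..1, ψ x ^ 2 with hY
  set Z := ∫ x in (0:ℝ)..1, (Γ x) ^ 2 * φ x ^ 4 with hZ
  have hκ0 : 0 ≤ κ' := le_trans (abs_nonneg _) (hbd 0)
  have hXnn : 0 ≤ X := intervalIntegral.integral_nonneg (by norm_num)
    (fun x _ => by positivity)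
  have hYnn : 0 ≤ Y := intervalIntegral.integral_nonneg (by norm_num)
    (fun x _ => by positivity)
  have hZnn : 0 ≤ Z := intervalIntegral.integral_nonneg (by norm_num)
    (fun x _ => by positivity)
  -- E1 : X = -3 ∫ Γ φ² ψ
  have E1 : X + 3 * ∫ x in (0:ℝ)..1, (Γ x * φ x ^ 2) * ψ x = 0 := by
    have hd : ∀ x ∈ uIcc (0:ℝ) 1, HasDerivAt (fun x => Γ x * φ x ^ 3)
        (φ x ^ 4 + 3 * ((Γ x * φ x ^ 2) * ψ x)) x := by
      intro x _
      have := (hΓder x).fun_mul ((hφder x).fun_pow 3)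
      refine this.congr_deriv ?_; simp only [Nat.cast_ofNat, Nat.reduceSub]; ring
    have hint : IntervalIntegrable (fun x => φ x ^ 4 + 3 * ((Γ x * φ x ^ 2) * ψ x))
        volume 0 1 :=
      ((hφc.pow 4).add (continuous_const.mul ((hΓc.mul (hφc.pow 2)).mul hψc))).intervalIntegrable _ _
    have := intervalIntegral.integral_eq_sub_of_hasDerivAt hd hint
    have hend : Γ 1 * φ 1 ^ 3 - Γ 0 * φ 0 ^ 3 = 0 := by
      have h1 : Γ 1 = Γ 0 := by have := hper 0; simpa using this
      have h2 : φ 1 = φ 0 := by have := hφper 0; simpa using this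
      rw [h1, h2]; ring
    rw [hend] at this
    rw [intervalIntegral.integral_add (f := fun x => φ x ^ 4) (g := fun x => 3 * ((Γ x * φ x ^ 2) * ψ x)) ((hφc.pow 4).intervalIntegrable _ _)
      ((continuous_const.mul ((hΓc.mul (hφc.pow 2)).mul hψc)).intervalIntegrable _ _)] at this
    rw [intervalIntegral.integral_const_mul] at this
    linarith [this]
  -- E2 : 3 Z + 3 ∫ Γ³ φ² ψ = 0
  have E2 : Z + ∫ x in (0:ℝ)..1, (Γ x ^ 3 * φ x ^ 2) * ψ x = 0 := by
    have hd : ∀ x ∈ uIcc (0:ℝ) 1, HasDerivAt (fun x => Γ x ^ 3 * φ x ^ 3)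
        (3 * ((Γ x) ^ 2 * φ x ^ 4) + 3 * ((Γ x ^ 3 * φ x ^ 2) * ψ x)) x := by
      intro x _
      have := ((hΓder x).fun_pow 3).fun_mul ((hφder x).fun_pow 3)
      refine this.congr_deriv ?_; simp only [Nat.cast_ofNat, Nat.reduceSub]; ring
    have hint : IntervalIntegrable
        (fun x => 3 * ((Γ x) ^ 2 * φ x ^ 4) + 3 * ((Γ x ^ 3 * φ x ^ 2) * ψ x)) volume 0 1 :=
      ((continuous_const.mul ((hΓc.pow 2).mul (hφc.pow 4))).add
        (continuous_const.mul (((hΓc.pow 3).mul (hφc.pow 2)).mul hψc))).intervalIntegrable _ _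
    have := intervalIntegral.integral_eq_sub_of_hasDerivAt hd hint
    have hend : Γ 1 ^ 3 * φ 1 ^ 3 - Γ 0 ^ 3 * φ 0 ^ 3 = 0 := by
      have h1 : Γ 1 = Γ 0 := by have := hper 0; simpa using this
      have h2 : φ 1 = φ 0 := by have := hφper 0; simpa using this
      rw [h1, h2]; ring
    rw [hend] at this
    rw [intervalIntegral.integral_add (f := fun x => 3 * ((Γ x) ^ 2 * φ x ^ 4))
      (g := fun x => 3 * ((Γ x ^ 3 * φ x ^ 2) * ψ x))
      ((continuous_const.mul ((hΓc.pow 2).mul (hφc.pow 4))).intervalIntegrable _ _)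
      ((continuous_const.mul (((hΓc.pow 3).mul (hφc.pow 2)).mul hψc)).intervalIntegrable _ _)] at this
    rw [intervalIntegral.integral_const_mul, intervalIntegral.integral_const_mul] at this
    linarith [this]
  -- CS1 : (X/3)² ≤ Z Y
  have CS1 : (X / 3) ^ 2 ≤ Z * Y := by
    have h := cs_interval (fun x => Γ x * φ x ^ 2) ψ (hΓc.mul (hφc.pow 2)) hψc
    have heq : (∫ x in (0:ℝ)..1, (Γ x * φ x ^ 2) ^ 2) = Z := by
      apply intervalIntegral.integral_congr; intro x _; ring
    have hB : (∫ x in (0:ℝ)..1, (Γ x * φ x ^ 2) * ψ x) = -(X / 3) := by linarith [E1]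
    rw [heq, hB] at h
    calc (X/3)^2 = (-(X/3))^2 := by ring
    _ ≤ Z * Y := h
  -- CS2 : Z² ≤ κ'⁶ X Y
  have CS2 : Z ^ 2 ≤ (κ' ^ 6 * X) * Y := by
    have h := cs_interval (fun x => Γ x ^ 3 * φ x ^ 2) ψ ((hΓc.pow 3).mul (hφc.pow 2)) hψc
    have hB : (∫ x in (0:ℝ)..1, (Γ x ^ 3 * φ x ^ 2) * ψ x) = -Z := by linarith [E2]
    have hmono : (∫ x in (0:ℝ)..1, (Γ x ^ 3 * φ x ^ 2) ^ 2) ≤ κ' ^ 6 * X := by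
      rw [hX, ← intervalIntegral.integral_const_mul]
      apply intervalIntegral.integral_mono_on (by norm_num)
        ((((hΓc.pow 3).mul (hφc.pow 2)).pow 2).intervalIntegrable _ _)
        ((continuous_const.mul (hφc.pow 4)).intervalIntegrable _ _)
      intro x _
      have h1 : |Γ x| ≤ κ' := hbd x
      have h2 : Γ x ^ 6 ≤ κ' ^ 6 := by
        calc Γ x ^ 6 = |Γ x| ^ 6 := by rw [← abs_pow]; rw [abs_of_nonneg (by positivity)]
        _ ≤ κ' ^ 6 := by exact pow_le_pow_left₀ (abs_nonneg _) h1 6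
      calc (Γ x ^ 3 * φ x ^ 2) ^ 2 = Γ x ^ 6 * φ x ^ 4 := by ring
      _ ≤ κ' ^ 6 * φ x ^ 4 := by nlinarith [pow_nonneg (sq_nonneg (φ x)) 2, sq_nonneg (φ x ^ 2)]
    rw [hB] at h
    calc Z^2 = (-Z)^2 := by ring
    _ ≤ (∫ x in (0:ℝ)..1, (Γ x ^ 3 * φ x ^ 2) ^ 2) * Y := h
    _ ≤ (κ' ^ 6 * X) * Y := by
        apply mul_le_mul_of_nonneg_right hmono hYnn
  -- conclude
  have main : X ≤ 6 * κ' ^ 2 * Y := by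
    rcases eq_or_lt_of_le hXnn with h0 | hXpos
    · rw [← h0]; positivity
    · have h4 : X ^ 4 ≤ 81 * ((κ' ^ 6 * X) * Y) * Y ^ 2 := by
        calc X ^ 4 = ((X/3)^2)^2 * 81 := by ring
        _ ≤ (Z*Y)^2 * 81 := by
            have := mul_le_mul_of_nonneg_right (pow_le_pow_left₀ (by positivity) CS1 2)
              (by norm_num : (0:ℝ) ≤ 81)
            simpa using this
        _ = Z^2 * Y^2 * 81 := by ring
        _ ≤ ((κ' ^ 6 * X) * Y) * Y^2 * 81 := by
            apply mul_le_mul_of_nonneg_right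
              (mul_le_mul_of_nonneg_right CS2 (by positivity)) (by norm_num)
        _ = 81 * ((κ' ^ 6 * X) * Y) * Y ^ 2 := by ring
      have h3 : X ^ 3 ≤ 81 * κ' ^ 6 * Y ^ 3 := by
        have := h4
        nlinarith [hXpos]
      have h3' : X ^ 3 ≤ (6 * κ' ^ 2 * Y) ^ 3 := by
        calc X ^ 3 ≤ 81 * κ' ^ 6 * Y ^ 3 := h3
        _ ≤ 216 * κ' ^ 6 * Y ^ 3 := by nlinarith [pow_nonneg hκ0 6, pow_nonneg hYnn 3]
        _ = (6 * κ' ^ 2 * Y) ^ 3 := by ring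
      exact le_of_pow_le_pow_left₀ (by norm_num) (by positivity) h3'
  linarith [main]

open MeasureTheory Real Set intervalIntegral

lemma top_add_one_le : ((⊤:ℕ∞) : WithTop ℕ∞) + 1 ≤ ((⊤:ℕ∞) : WithTop ℕ∞) := by
  norm_cast

lemma one_le_top' : (1 : WithTop ℕ∞) ≤ ((⊤:ℕ∞) : WithTop ℕ∞) := by
  norm_cast

lemma two_le_top' : (2 : WithTop ℕ∞) ≤ ((⊤:ℕ∞) : WithTop ℕ∞) := by
  norm_cast

noncomputable def px (h : ℝ × ℝ → ℝ) : ℝ × ℝ → ℝ := fun p => fderiv ℝ h p (0, 1)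
noncomputable def pt (h : ℝ × ℝ → ℝ) : ℝ × ℝ → ℝ := fun p => fderiv ℝ h p (1, 0)

lemma contDiff_px {h : ℝ × ℝ → ℝ} (hh : ContDiff ℝ (⊤:ℕ∞) h) :
    ContDiff ℝ (⊤:ℕ∞) (px h) :=
  (hh.fderiv_right top_add_one_le).clm_apply contDiff_const

lemma contDiff_pt {h : ℝ × ℝ → ℝ} (hh : ContDiff ℝ (⊤:ℕ∞) h) :
    ContDiff ℝ (⊤:ℕ∞) (pt h) :=
  (hh.fderiv_right top_add_one_le).clm_apply contDiff_const

lemma hasDerivAt_px {h : ℝ × ℝ → ℝ} (hh : ContDiff ℝ (⊤:ℕ∞) h) (t x : ℝ) :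
    HasDerivAt (fun y => h (t, y)) (px h (t, x)) x := by
  have hd : HasFDerivAt h (fderiv ℝ h (t, x)) (t, x) :=
    ((hh.differentiable (by simp)) (t, x)).hasFDerivAt
  have hc : HasDerivAt (fun y : ℝ => ((t, y) : ℝ × ℝ)) ((0 : ℝ), (1 : ℝ)) x :=
    (hasDerivAt_const x t).prodMk (hasDerivAt_id x)
  exact hd.comp_hasDerivAt x hc

lemma hasDerivAt_pt {h : ℝ × ℝ → ℝ} (hh : ContDiff ℝ (⊤:ℕ∞) h) (t x : ℝ) :
    HasDerivAt (fun s => h (s, x)) (pt h (t, x)) t := by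
  have hd : HasFDerivAt h (fderiv ℝ h (t, x)) (t, x) :=
    ((hh.differentiable (by simp)) (t, x)).hasFDerivAt
  have hc : HasDerivAt (fun s : ℝ => ((s, x) : ℝ × ℝ)) ((1 : ℝ), (0 : ℝ)) t :=
    (hasDerivAt_id t).prodMk (hasDerivAt_const t x)
  exact hd.comp_hasDerivAt t hc

/-- Clairaut for our slices. -/
lemma pt_px_eq {h : ℝ × ℝ → ℝ} (hh : ContDiff ℝ (⊤:ℕ∞) h) (p : ℝ × ℝ) :
    pt (px h) p = px (pt h) p := by
  have hdiff : Differentiable ℝ (fderiv ℝ h) :=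
    (hh.fderiv_right (m := (⊤:ℕ∞)) top_add_one_le).differentiable (by simp)
  have key : ∀ v w : ℝ × ℝ,
      fderiv ℝ (fun q => fderiv ℝ h q v) p w = fderiv ℝ (fderiv ℝ h) p w v := by
    intro v w
    have := fderiv_clm_apply (hdiff p) (differentiableAt_const v)
    rw [this]
    simp
  have hsymm : IsSymmSndFDerivAt ℝ h p :=
    (hh.contDiffAt).isSymmSndFDerivAt (by simpa only [minSmoothness_of_isRCLikeNormedField] using two_le_top')
  show fderiv ℝ (fun q => fderiv ℝ h q (0,1)) p (1,0)
      = fderiv ℝ (fun q => fderiv ℝ h q (1,0)) p (0,1)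
  rw [key, key]
  exact hsymm.eq _ _
/-- (i) For smooth `1`-periodic `Γ, φ` with `∂ₓ Γ = φ` and
`‖Γ‖_{L^∞} ≤ κ'`, one has `½ ∫_𝕋 φ⁴ ≤ 3 κ'² ∫_𝕋 (∂ₓ φ)²`.  (ii) Consequently,
for a smooth solution `θ` of `∂ₜ θ + u ∂ₓ θ = ∂ₓ² θ`,
`∂ₓ u = −(∂ₓ θ)² + ∫(∂ₓ θ)²`, whose oscillation stays `≤ κ ≤ 1/√3` in time,
the quantity `∫_𝕋 (∂ₓ θ(t,·))²` is non-increasing (no blow-up in `Ḣ¹`). -/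
theorem small_oscillation_global
    (T κ : ℝ) (hT : 0 < T) (hκpos : 0 ≤ κ) (hκ : κ ≤ 1 / Real.sqrt 3)
    (θ u : ℝ → ℝ → ℝ)
    (hθ : ContDiff ℝ (⊤ : ℕ∞) (fun q : ℝ × ℝ => θ q.1 q.2))
    (hu : ContDiff ℝ (⊤ : ℕ∞) (fun q : ℝ × ℝ => u q.1 q.2))
    (hθper : ∀ t x, θ t (x + 1) = θ t x)
    (huper : ∀ t x, u t (x + 1) = u t x)
    (hux : ∀ t ∈ Set.Ico (0:ℝ) T, ∀ x,
      deriv (u t) x = -(deriv (θ t) x) ^ 2 + ∫ y in (0:ℝ)..1, (deriv (θ t) y) ^ 2)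
    (hpde : ∀ t ∈ Set.Ico (0:ℝ) T, ∀ x,
      deriv (fun s => θ s x) t + u t x * deriv (θ t) x = deriv (deriv (θ t)) x)
    (hosc : ∀ t ∈ Set.Ico (0:ℝ) T, ∀ x y, θ t x - θ t y ≤ κ) :
    (∀ (κ' : ℝ) (Γ : ℝ → ℝ), ContDiff ℝ 2 Γ → (∀ x, Γ (x + 1) = Γ x) →
        (∀ x, |Γ x| ≤ κ') →
        (1 / 2) * ∫ x in (0:ℝ)..1, (deriv Γ x) ^ 4
          ≤ 3 * κ' ^ 2 * ∫ x in (0:ℝ)..1, (deriv (deriv Γ) x) ^ 2) ∧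
    AntitoneOn (fun t => ∫ x in (0:ℝ)..1, (deriv (θ t) x) ^ 2) (Set.Ico 0 T) := by
  refine ⟨fun κ' Γ h1 h2 h3 => part_one κ' Γ h1 h2 h3, ?_⟩
  have hκ2 : κ ^ 2 ≤ 1 / 3 := by
    have h1 : κ ^ 2 ≤ (1 / Real.sqrt 3) ^ 2 := pow_le_pow_left₀ hκpos hκ 2
    have h2 : (Real.sqrt 3) ^ 2 = 3 := Real.sq_sqrt (by norm_num)
    have h3 : (0:ℝ) < Real.sqrt 3 := Real.sqrt_pos.mpr (by norm_num)
    rw [div_pow, h2, one_pow] at h1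
    linarith
  set f : ℝ × ℝ → ℝ := fun q => θ q.1 q.2 with hfdef
  set g : ℝ × ℝ → ℝ := fun q => u q.1 q.2 with hgdef
  have hf : ContDiff ℝ (⊤:ℕ∞) f := hθ.of_le (by simp)
  have hg : ContDiff ℝ (⊤:ℕ∞) g := hu.of_le (by simp)
  have hf1 : ContDiff ℝ (⊤:ℕ∞) (px f) := contDiff_px hf
  have hf2 : ContDiff ℝ (⊤:ℕ∞) (px (px f)) := contDiff_px hf1
  have hf3 : ContDiff ℝ (⊤:ℕ∞) (px (px (px f))) := contDiff_px hf2
  have hftx : ContDiff ℝ (⊤:ℕ∞) (pt (px f)) := contDiff_pt hf1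
  have hft : ContDiff ℝ (⊤:ℕ∞) (pt f) := contDiff_pt hf
  have hg1 : ContDiff ℝ (⊤:ℕ∞) (px g) := contDiff_px hg
  -- slice derivatives
  have hDθ : ∀ t x, HasDerivAt (θ t) (px f (t, x)) x := fun t x => hasDerivAt_px hf t x
  have hA : ∀ t x, deriv (θ t) x = px f (t, x) := fun t x => (hDθ t x).deriv
  have hθs1 : ∀ t, deriv (θ t) = fun x => px f (t, x) := fun t => funext fun x => hA t x
  have hDθ2 : ∀ t x, HasDerivAt (deriv (θ t)) (px (px f) (t, x)) x := by
    intro t x; rw [hθs1 t]; exact hasDerivAt_px hf1 t x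
  have hB : ∀ t x, deriv (deriv (θ t)) x = px (px f) (t, x) := fun t x => (hDθ2 t x).deriv
  have hDu : ∀ t x, HasDerivAt (u t) (px g (t, x)) x := fun t x => hasDerivAt_px hg t x
  have hAu : ∀ t x, deriv (u t) x = px g (t, x) := fun t x => (hDu t x).deriv
  have hDt : ∀ t x, HasDerivAt (fun s => θ s x) (pt f (t, x)) t := fun t x => hasDerivAt_pt hf t x
  have hCt : ∀ t x, deriv (fun s => θ s x) t = pt f (t, x) := fun t x => (hDt t x).deriv
  -- periodicity of slices
  have hf1per : ∀ t x, px f (t, x + 1) = px f (t, x) := by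
    intro t x; rw [← hA, ← hA]; exact deriv_periodic (θ t) (hθper t) x
  have hf2per : ∀ t x, px (px f) (t, x + 1) = px (px f) (t, x) := by
    intro t x; rw [← hB, ← hB]
    exact deriv_periodic (deriv (θ t)) (fun y => by rw [hA, hA, hf1per]) x
  -- mixed partial via PDE
  have hMix : ∀ t ∈ Set.Ico (0:ℝ) T, ∀ x, pt (px f) (t, x)
      = px (px (px f)) (t, x) - (px g (t, x) * px f (t, x) + u t x * px (px f) (t, x)) := by
    intro t ht x
    have hE : (fun y => pt f (t, y)) = fun y => px (px f) (t, y) - u t y * px f (t, y) := by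
      funext y
      have h0 := hpde t ht y
      rw [hCt, hA, hB] at h0
      linarith
    have h1 : HasDerivAt (fun y => pt f (t, y)) (px (pt f) (t, x)) x := hasDerivAt_px hft t x
    have h2 : HasDerivAt (fun y => px (px f) (t, y) - u t y * px f (t, y))
        (px (px (px f)) (t, x) - (px g (t, x) * px f (t, x) + u t x * px (px f) (t, x))) x :=
      (hasDerivAt_px hf2 t x).sub ((hDu t x).mul (hasDerivAt_px hf1 t x))
    rw [hE] at h1
    have h3 := h1.unique h2
    calc pt (px f) (t, x) = px (pt f) (t, x) := pt_px_eq hf (t, x)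
    _ = px (px (px f)) (t, x) - (px g (t, x) * px f (t, x) + u t x * px (px f) (t, x)) := h3
  -- the energy functional
  set G : ℝ → ℝ := fun t => ∫ x in (0:ℝ)..1, (px f (t, x)) ^ 2 with hGdef
  have hGeq : (fun t => ∫ x in (0:ℝ)..1, (deriv (θ t) x) ^ 2) = G := by
    funext t
    exact intervalIntegral.integral_congr (fun x _ => by rw [hA])
  have hGc : Continuous G := by
    have hcu : Continuous (Function.uncurry (fun t x => (px f (t, x)) ^ 2)) := by
      have : Continuous fun p : ℝ × ℝ => (px f p) ^ 2 := hf1.continuous.pow 2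
      exact this
    exact intervalIntegral.continuous_parametric_intervalIntegral_of_continuous' (μ := volume) hcu 0 1
  -- derivative of G
  have key : ∀ t₀ ∈ Ioo (0:ℝ) T,
      HasDerivAt G (∫ x in (0:ℝ)..1, 2 * px f (t₀, x) * pt (px f) (t₀, x)) t₀ := by
    intro t₀ _
    have hcont : Continuous fun p : ℝ × ℝ => 2 * px f p * pt (px f) p :=
      (continuous_const.mul hf1.continuous).mul hftx.continuous
    obtain ⟨C, hC⟩ := (IsCompact.prod isCompact_Icc isCompact_Icc :
        IsCompact (Icc (t₀ - 1) (t₀ + 1) ×ˢ Icc (0:ℝ) 1)).exists_bound_of_continuousOn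
      hcont.continuousOn
    have hmeas : ∀ t : ℝ, AEStronglyMeasurable (fun x => (px f (t, x)) ^ 2)
        (volume.restrict (Set.uIoc (0:ℝ) 1)) := fun t =>
      ((hf1.continuous.comp (continuous_const.prodMk continuous_id)).pow
        2).aestronglyMeasurable.restrict
    have hmeas' : AEStronglyMeasurable (fun x => 2 * px f (t₀, x) * pt (px f) (t₀, x))
        (volume.restrict (Set.uIoc (0:ℝ) 1)) :=
      (hcont.comp (continuous_const.prodMk continuous_id)).aestronglyMeasurable.restrict
    have main := intervalIntegral.hasDerivAt_integral_of_dominated_loc_of_deriv_le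
      (F := fun t x => (px f (t, x)) ^ 2) (F' := fun t x => 2 * px f (t, x) * pt (px f) (t, x))
      (x₀ := t₀) (a := (0:ℝ)) (b := 1) (bound := fun _ => C) (s := Metric.ball t₀ 1) (Metric.ball_mem_nhds t₀ one_pos)
      (Filter.Eventually.of_forall hmeas)
      (((hf1.continuous.comp (continuous_const.prodMk continuous_id)).pow 2
          ).intervalIntegrable _ _)
      hmeas'
      ?_ (intervalIntegrable_const) ?_
    · exact main.2
    · apply Filter.Eventually.of_forall
      intro x hx t htb
      have hx' : x ∈ Icc (0:ℝ) 1 := by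
        have : x ∈ Set.Ioc (0:ℝ) 1 := by rwa [Set.uIoc_of_le (by norm_num : (0:ℝ) ≤ 1)] at hx
        exact ⟨le_of_lt this.1, this.2⟩
      have ht' : t ∈ Icc (t₀ - 1) (t₀ + 1) := by
        have : |t - t₀| < 1 := by rwa [Metric.mem_ball, Real.dist_eq] at htb
        have h1 := abs_lt.mp this
        exact ⟨by linarith [h1.1], by linarith [h1.2]⟩
      exact hC (t, x) (Set.mk_mem_prod ht' hx')
    · apply Filter.Eventually.of_forall
      intro x _ t _
      have h := (hasDerivAt_pt hf1 t x).fun_pow 2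
      refine h.congr_deriv ?_
      simp
  -- value of the derivative is nonpositive
  have hval : ∀ t₀ ∈ Ioo (0:ℝ) T,
      (∫ x in (0:ℝ)..1, 2 * px f (t₀, x) * pt (px f) (t₀, x)) ≤ 0 := by
    intro t₀ ht₀
    have htIco : t₀ ∈ Set.Ico (0:ℝ) T := ⟨le_of_lt ht₀.1, ht₀.2⟩
    have ha : Continuous fun x => px f (t₀, x) :=
      hf1.continuous.comp (continuous_const.prodMk continuous_id)
    have hb : Continuous fun x => px (px f) (t₀, x) :=
      hf2.continuous.comp (continuous_const.prodMk continuous_id)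
    have hc3 : Continuous fun x => px (px (px f)) (t₀, x) :=
      hf3.continuous.comp (continuous_const.prodMk continuous_id)
    have hw : Continuous (u t₀) :=
      hg.continuous.comp (continuous_const.prodMk continuous_id)
    have hw1 : Continuous fun x => px g (t₀, x) :=
      hg1.continuous.comp (continuous_const.prodMk continuous_id)
    set X := ∫ x in (0:ℝ)..1, (px f (t₀, x)) ^ 4 with hXdef
    set Y := ∫ x in (0:ℝ)..1, (px (px f) (t₀, x)) ^ 2 with hYdef
    set c := ∫ y in (0:ℝ)..1, (px f (t₀, y)) ^ 2 with hcdef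
    have hXnn : 0 ≤ X := intervalIntegral.integral_nonneg (by norm_num) fun x _ => by positivity
    have hYnn : 0 ≤ Y := intervalIntegral.integral_nonneg (by norm_num) fun x _ => by positivity
    -- IBP 1 : ∫ (a c3 + b²) = 0
    have IBP1 : (∫ x in (0:ℝ)..1,
        (px f (t₀, x) * px (px (px f)) (t₀, x) + (px (px f) (t₀, x)) ^ 2)) = 0 := by
      have hd : ∀ x ∈ uIcc (0:ℝ) 1, HasDerivAt (fun x => px f (t₀, x) * px (px f) (t₀, x))
          (px f (t₀, x) * px (px (px f)) (t₀, x) + (px (px f) (t₀, x)) ^ 2) x := by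
        intro x _
        have := (hasDerivAt_px hf1 t₀ x).fun_mul (hasDerivAt_px hf2 t₀ x)
        refine this.congr_deriv ?_; ring
      have := intervalIntegral.integral_eq_sub_of_hasDerivAt hd
        (((ha.mul hc3).add (hb.pow 2)).intervalIntegrable _ _)
      beta_reduce at this
      rw [this]
      have e1 : px f (t₀, 1) = px f (t₀, 0) := by simpa using hf1per t₀ 0
      have e2 : px (px f) (t₀, 1) = px (px f) (t₀, 0) := by simpa using hf2per t₀ 0
      rw [e1, e2]; ring
    -- IBP 2 : ∫ (w1 a² + 2 w a b) = 0
    have IBP2 : (∫ x in (0:ℝ)..1, (px g (t₀, x) * (px f (t₀, x)) ^ 2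
        + 2 * (u t₀ x * (px f (t₀, x) * px (px f) (t₀, x))))) = 0 := by
      have hd : ∀ x ∈ uIcc (0:ℝ) 1, HasDerivAt (fun x => u t₀ x * (px f (t₀, x)) ^ 2)
          (px g (t₀, x) * (px f (t₀, x)) ^ 2
            + 2 * (u t₀ x * (px f (t₀, x) * px (px f) (t₀, x)))) x := by
        intro x _
        have := (hDu t₀ x).fun_mul ((hasDerivAt_px hf1 t₀ x).fun_pow 2)
        refine this.congr_deriv ?_; simp; ring
      have := intervalIntegral.integral_eq_sub_of_hasDerivAt hd
        (((hw1.mul (ha.pow 2)).add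
          (continuous_const.mul (hw.mul (ha.mul hb)))).intervalIntegrable _ _)
      beta_reduce at this
      rw [this]
      have e1 : px f (t₀, 1) = px f (t₀, 0) := by simpa using hf1per t₀ 0
      have e2 : u t₀ 1 = u t₀ 0 := by simpa using huper t₀ 0
      rw [e1, e2]; ring
    -- rewrite w1 via hux
    have hw1eq : ∀ x, px g (t₀, x) = -(px f (t₀, x)) ^ 2 + c := by
      intro x
      rw [← hAu]
      rw [hux t₀ htIco x, hA]
      congr 1
      exact intervalIntegral.integral_congr fun y _ => by rw [hA]
    -- compute the integral
    have split : (∫ x in (0:ℝ)..1, 2 * px f (t₀, x) * pt (px f) (t₀, x))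
        = -2 * Y + X - c ^ 2 := by
      have hintg : (∫ x in (0:ℝ)..1, 2 * px f (t₀, x) * pt (px f) (t₀, x))
          = ∫ x in (0:ℝ)..1, (2 * (px f (t₀, x) * px (px (px f)) (t₀, x) + (px (px f) (t₀, x)) ^ 2)
            - (px g (t₀, x) * (px f (t₀, x)) ^ 2
              + 2 * (u t₀ x * (px f (t₀, x) * px (px f) (t₀, x))))
            - 2 * (px (px f) (t₀, x)) ^ 2 - (px g (t₀, x) * (px f (t₀, x)) ^ 2)) := by
        apply intervalIntegral.integral_congr
        intro x _
        beta_reduce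
        rw [hMix t₀ htIco x]
        ring
      rw [hintg]
      have hIBP1' : (∫ x in (0:ℝ)..1, 2 * (px f (t₀, x) * px (px (px f)) (t₀, x)
          + (px (px f) (t₀, x)) ^ 2)) = 0 := by
        rw [intervalIntegral.integral_const_mul, IBP1]; ring
      rw [intervalIntegral.integral_sub, intervalIntegral.integral_sub,
        intervalIntegral.integral_sub]
      rotate_left
      · exact (continuous_const.mul ((ha.mul hc3).add (hb.pow 2))).intervalIntegrable _ _
      · exact ((hw1.mul (ha.pow 2)).add
          (continuous_const.mul (hw.mul (ha.mul hb)))).intervalIntegrable _ _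
      · exact ((continuous_const.mul ((ha.mul hc3).add (hb.pow 2))).sub
          ((hw1.mul (ha.pow 2)).add
            (continuous_const.mul (hw.mul (ha.mul hb))))).intervalIntegrable _ _
      · exact (continuous_const.mul (hb.pow 2)).intervalIntegrable _ _
      · exact (((continuous_const.mul ((ha.mul hc3).add (hb.pow 2))).sub
          ((hw1.mul (ha.pow 2)).add
            (continuous_const.mul (hw.mul (ha.mul hb))))).sub
          (continuous_const.mul (hb.pow 2))).intervalIntegrable _ _
      · exact (hw1.mul (ha.pow 2)).intervalIntegrable _ _
      have hY2 : (∫ x in (0:ℝ)..1, 2 * (px (px f) (t₀, x)) ^ 2) = 2 * Y := by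
        rw [intervalIntegral.integral_const_mul, hYdef]
      have hlast : (∫ x in (0:ℝ)..1, px g (t₀, x) * (px f (t₀, x)) ^ 2) = -X + c * c := by
        have : (∫ x in (0:ℝ)..1, px g (t₀, x) * (px f (t₀, x)) ^ 2)
            = ∫ x in (0:ℝ)..1, (-(px f (t₀, x)) ^ 4 + c * (px f (t₀, x)) ^ 2) := by
          apply intervalIntegral.integral_congr
          intro x _
          beta_reduce
          rw [hw1eq x]; ring
        have i1 : IntervalIntegrable (fun x => -(px f (t₀, x)) ^ 4) volume 0 1 :=
          ((ha.pow 4).neg).intervalIntegrable _ _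
        have i2 : IntervalIntegrable (fun x => c * (px f (t₀, x)) ^ 2) volume 0 1 :=
          (continuous_const.mul (ha.pow 2)).intervalIntegrable _ _
        rw [this, intervalIntegral.integral_add i1 i2, intervalIntegral.integral_neg,
          intervalIntegral.integral_const_mul, hXdef, hcdef]
      rw [hIBP1', IBP2, hY2, hlast]
      ring
    -- the key inequality from part one
    have hineq : (1 / 2) * X ≤ 3 * κ ^ 2 * Y := by
      have hΓcd : ContDiff ℝ 2 (fun x => θ t₀ x - θ t₀ 0) := by
        have h0 : ContDiff ℝ (⊤:ℕ∞) (θ t₀) := hf.comp (contDiff_const.prodMk contDiff_id)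
        exact (h0.sub contDiff_const).of_le (by norm_cast)
      have hΓper : ∀ x, θ t₀ (x + 1) - θ t₀ 0 = θ t₀ x - θ t₀ 0 := by
        intro x; rw [hθper]
      have hΓbd : ∀ x, |θ t₀ x - θ t₀ 0| ≤ κ := by
        intro x
        rw [abs_le]
        constructor
        · have := hosc t₀ htIco 0 x; linarith
        · exact hosc t₀ htIco x 0
      have h := part_one κ (fun x => θ t₀ x - θ t₀ 0) hΓcd hΓper hΓbd
      have hder : deriv (fun x => θ t₀ x - θ t₀ 0) = deriv (θ t₀) := by
        funext x; exact deriv_sub_const _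
      rw [hder] at h
      have hX' : (∫ x in (0:ℝ)..1, (deriv (θ t₀) x) ^ 4) = X :=
        intervalIntegral.integral_congr fun x _ => by rw [hA]
      have hY' : (∫ x in (0:ℝ)..1, (deriv (deriv (θ t₀)) x) ^ 2) = Y :=
        intervalIntegral.integral_congr fun x _ => by rw [hB]
      rwa [hX', hY'] at h
    have hXle : X ≤ 2 * Y := by nlinarith [hineq, hκ2, hYnn]
    rw [split]
    nlinarith [sq_nonneg c]
  -- conclude
  rw [hGeq]
  apply antitoneOn_of_deriv_nonpos (convex_Ico 0 T) hGc.continuousOn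
  · intro t ht
    rw [interior_Ico] at ht
    exact ((key t ht).differentiableAt).differentiableWithinAt
  · intro t ht
    rw [interior_Ico] at ht
    rw [(key t ht).deriv]
    exact hval t ht
end

section
/- Let b ∈ C¹([0,T] × 𝕋; ℝ²) solve ∂_t b + ∂_x(u b) = ε ∂_x² b with ∂_x u = (1/2)(|b|² − ∫_𝕋 |b|²), for some ε ≥ 0. Then ‖b‖_{L^∞([0,T]×𝕋)} ≤ ‖b(0,·)‖_{L^∞(𝕋)}: the maximum of |b|² over space-time is attained at t = 0. -/
open MeasureTheory Real Set

open scoped RealInnerProductSpace Topology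

lemma rmp_hasDerivAt_norm_sq {E : Type*} [NormedAddCommGroup E] [InnerProductSpace ℝ E]
    {g : ℝ → E} {g' : E} {x : ℝ} (hg : HasDerivAt g g' x) :
    HasDerivAt (fun y => ‖g y‖ ^ 2) (2 * ⟪g x, g'⟫) x := by
  have h := hg.inner ℝ hg
  have : (fun y => ‖g y‖ ^ 2) = fun y => ⟪g y, g y⟫ := by
    funext y; rw [real_inner_self_eq_norm_sq]
  rw [this]
  refine h.congr_deriv ?_
  rw [real_inner_comm g' (g x)]; ring

lemma rmp_second_deriv_nonpos {f : ℝ → ℝ} {x₀ : ℝ} (hf : Differentiable ℝ f)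
    (hf' : DifferentiableAt ℝ (deriv f) x₀) (hmax : ∀ x, f x ≤ f x₀) :
    deriv (deriv f) x₀ ≤ 0 := by
  by_contra h
  push_neg at h
  have hloc : IsLocalMax f x₀ := Filter.Eventually.of_forall hmax
  have hz : deriv f x₀ = 0 := hloc.deriv_eq_zero
  have hd : HasDerivAt (deriv f) (deriv (deriv f) x₀) x₀ := hf'.hasDerivAt
  have hslope := hasDerivAt_iff_tendsto_slope.mp hd
  have hpos : ∀ᶠ y in 𝓝[>] x₀, 0 < deriv f y := by
    have h1 : Filter.Tendsto (slope (deriv f) x₀) (𝓝[>] x₀) (𝓝 (deriv (deriv f) x₀)) :=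
      hslope.mono_left (nhdsWithin_mono _ (fun y hy => ne_of_gt hy))
    have h2 : ∀ᶠ y in 𝓝[>] x₀, 0 < slope (deriv f) x₀ y :=
      h1.eventually (eventually_gt_nhds h)
    filter_upwards [h2, self_mem_nhdsWithin] with y hy hy'
    rw [slope_def_field, hz, sub_zero, div_pos_iff] at hy
    rcases hy with ⟨h3, _⟩ | ⟨_, h4⟩
    · exact h3
    · exfalso; rw [sub_neg] at h4; exact absurd hy' (not_lt.mpr h4.le)
  rw [eventually_nhdsWithin_iff] at hpos
  obtain ⟨η, hη, hball⟩ := Metric.eventually_nhds_iff.mp hpos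
  set y := x₀ + η / 2 with hy
  have hxy : x₀ < y := by simp [hy]; positivity
  obtain ⟨c, hc, hceq⟩ := exists_hasDerivAt_eq_slope f (deriv f) hxy
    (hf.continuous.continuousOn) (fun z _ => (hf z).hasDerivAt)
  have hcpos : 0 < deriv f c := by
    apply hball
    · rw [Real.dist_eq, abs_of_pos (by linarith [hc.1])]
      have := hc.2; simp only [hy] at this ⊢; linarith [hη]
    · exact hc.1
  rw [hceq] at hcpos
  have : f y ≤ f x₀ := hmax y
  rw [div_pos_iff] at hcpos
  rcases hcpos with ⟨h3, _⟩ | ⟨_, h4⟩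
  · linarith [sub_pos.mp h3]
  · linarith [sub_neg.mp h4]

/-- Maximum principle for the resistive system: if `b` is a
`C¹` solution (with `C²` spatial regularity) on `[0,T] × 𝕋` of
`∂ₜ b + ∂ₓ(u b) = ε ∂ₓ² b`, `∂ₓ u = ½(|b|² − ∫_𝕋 |b|²)`, with `ε ≥ 0`, then
`‖b‖_{L^∞([0,T] × 𝕋)} ≤ ‖b(0,·)‖_{L^∞(𝕋)}`. -/
theorem resistive_maximum_principle
    (T ε : ℝ) (hT : 0 < T) (hε : 0 ≤ ε)
    (b : ℝ → ℝ → EuclideanSpace ℝ (Fin 2)) (u : ℝ → ℝ → ℝ)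
    (hb : ContDiff ℝ 1 (fun p : ℝ × ℝ => b p.1 p.2))
    (hbx : ∀ t, ContDiff ℝ 2 (b t))
    (hu : ContDiff ℝ 1 (fun p : ℝ × ℝ => u p.1 p.2))
    (hbper : ∀ t x, b t (x + 1) = b t x)
    (huper : ∀ t x, u t (x + 1) = u t x)
    (hux : ∀ t ∈ Set.Icc (0:ℝ) T, ∀ x, deriv (fun y => u t y) x
      = (1 / 2) * (‖b t x‖ ^ 2 - ∫ y in (0:ℝ)..1, ‖b t y‖ ^ 2))
    (hpde : ∀ t ∈ Set.Icc (0:ℝ) T, ∀ x,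
      deriv (fun s => b s x) t + deriv (fun y => u t y • b t y) x
        = ε • deriv (fun y => deriv (fun z => b t z) y) x) :
    ∀ t ∈ Set.Icc (0:ℝ) T, ∀ x : ℝ,
      ‖b t x‖ ≤ ⨆ y : Set.Icc (0:ℝ) 1, ‖b 0 (y : ℝ)‖ := by
  intro t₀ ht₀ x₀
  set S := ⨆ y : Set.Icc (0:ℝ) 1, ‖b 0 (y:ℝ)‖ with hSdef
  -- basic facts about S
  have hbdd : BddAbove (Set.range fun y : Set.Icc (0:ℝ) 1 => ‖b 0 (y:ℝ)‖) := by
    obtain ⟨C, hC⟩ := (isCompact_Icc.image_of_continuousOn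
      (((hbx 0).continuous.norm).continuousOn)).bddAbove
    refine ⟨C, ?_⟩
    rintro _ ⟨y, rfl⟩
    exact hC (Set.mem_image_of_mem _ y.2)
  have hSle : ∀ y ∈ Set.Icc (0:ℝ) 1, ‖b 0 y‖ ≤ S := fun y hy => le_ciSup hbdd ⟨y, hy⟩
  have hS0 : 0 ≤ S := le_trans (norm_nonneg _) (hSle 0 ⟨le_rfl, one_pos.le⟩)
  -- periodicity via fract
  have hper : ∀ t x, b t (Int.fract x) = b t x := by
    intro t x
    have hp : Function.Periodic (b t) 1 := fun y => hbper t y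
    have h := hp.sub_int_mul_eq (n := ⌊x⌋) (x := x)
    have hfr : Int.fract x = x - (⌊x⌋ : ℝ) * 1 := by rw [mul_one]; rfl
    rw [hfr]
    exact h
  -- differentiability facts
  have hbt : ∀ x t, HasDerivAt (fun s => b s x) (deriv (fun s => b s x) t) t := by
    intro x t
    have : Differentiable ℝ (fun s : ℝ => b s x) :=
      (hb.differentiable one_ne_zero).comp (differentiable_id.prodMk (differentiable_const x))
    exact (this t).hasDerivAt
  have hbxd : ∀ t x, HasDerivAt (b t) (deriv (b t) x) x := fun t x =>
    (((hbx t).differentiable (by norm_num)) x).hasDerivAt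
  have hbxd2 : ∀ t, Differentiable ℝ (deriv (b t)) := by
    intro t
    have h2 : ContDiff ℝ (1 + 1) (b t) := by norm_num; exact hbx t
    exact (contDiff_succ_iff_deriv.mp h2).2.2.differentiable one_ne_zero
  have hud : ∀ t x, HasDerivAt (u t) (deriv (u t) x) x := by
    intro t x
    have : Differentiable ℝ (fun y : ℝ => u t y) :=
      (hu.differentiable one_ne_zero).comp (differentiable_const t |>.prodMk differentiable_id)
    exact (this x).hasDerivAt
  -- reduce to squares
  suffices h2 : ‖b t₀ x₀‖ ^ 2 ≤ S ^ 2 by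
    have h3 := Real.sqrt_le_sqrt h2
    rwa [Real.sqrt_sq (norm_nonneg _), Real.sqrt_sq hS0] at h3
  have key : ∀ δ : ℝ, 0 < δ → ‖b t₀ x₀‖ ^ 2 ≤ S ^ 2 + δ * T := by
    intro δ hδ
    set K : Set (ℝ × ℝ) := Set.Icc (0:ℝ) T ×ˢ Set.Icc (0:ℝ) 1 with hKdef
    have hKc : IsCompact K := isCompact_Icc.prod isCompact_Icc
    have hKne : K.Nonempty := ⟨(0,0), ⟨⟨le_rfl, hT.le⟩, ⟨le_rfl, one_pos.le⟩⟩⟩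
    have hgcont : Continuous (fun p : ℝ × ℝ => ‖b p.1 p.2‖ ^ 2 - δ * p.1) := by
      apply Continuous.sub
      · exact (hb.continuous.norm).pow 2
      · exact continuous_const.mul continuous_fst
    obtain ⟨p, hpK, hpmax⟩ := hKc.exists_isMaxOn hKne hgcont.continuousOn
    have hpmax' : ∀ q ∈ K, ‖b q.1 q.2‖ ^ 2 - δ * q.1 ≤ ‖b p.1 p.2‖ ^ 2 - δ * p.1 :=
      fun q hq => hpmax hq
    set t₁ := p.1 with ht1def
    set x₁ := p.2 with hx1def
    have ht1 : t₁ ∈ Set.Icc (0:ℝ) T := hpK.1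
    have hx1 : x₁ ∈ Set.Icc (0:ℝ) 1 := hpK.2
    -- main comparison for (t₀, x₀)
    have hmain : ‖b t₀ x₀‖ ^ 2 - δ * t₀ ≤ ‖b t₁ x₁‖ ^ 2 - δ * t₁ := by
      have hmem : ((t₀, Int.fract x₀) : ℝ × ℝ) ∈ K :=
        ⟨ht₀, ⟨Int.fract_nonneg _, (Int.fract_lt_one _).le⟩⟩
      have h := hpmax' _ hmem
      simpa [hper] using h
    -- the maximum is at t₁ = 0
    have htop : ‖b t₁ x₁‖ ^ 2 - δ * t₁ ≤ S ^ 2 := by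
      rcases eq_or_lt_of_le ht1.1 with h0 | h0
      · have hb0 : ‖b t₁ x₁‖ ≤ S := by rw [← h0]; exact hSle x₁ hx1
        have : ‖b t₁ x₁‖ ^ 2 ≤ S ^ 2 := by
          apply pow_le_pow_left₀ (norm_nonneg _) hb0
        nlinarith [mul_nonneg hδ.le ht1.1]
      · exfalso
        -- spatial max at x₁ for time t₁
        have hxmax : ∀ x, ‖b t₁ x‖ ^ 2 ≤ ‖b t₁ x₁‖ ^ 2 := by
          intro x
          have hmem : ((t₁, Int.fract x) : ℝ × ℝ) ∈ K :=
            ⟨ht1, ⟨Int.fract_nonneg _, (Int.fract_lt_one _).le⟩⟩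
          have h := hpmax' _ hmem
          simp only [hper] at h
          linarith
        set B := b t₁ x₁ with hBdef
        set Bx := deriv (b t₁) x₁ with hBxdef
        set Bxx := deriv (deriv (b t₁)) x₁ with hBxxdef
        set Bt := deriv (fun s => b s x₁) t₁ with hBtdef
        set U := u t₁ x₁ with hUdef
        set Ux := deriv (u t₁) x₁ with hUxdef
        -- spatial deriv of |b|^2 vanishes at x₁
        have hfx : ∀ x, HasDerivAt (fun y => ‖b t₁ y‖ ^ 2)
            (2 * ⟪b t₁ x, deriv (b t₁) x⟫) x :=
          fun x => rmp_hasDerivAt_norm_sq (hbxd t₁ x)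
        have hlocmax : IsLocalMax (fun y => ‖b t₁ y‖ ^ 2) x₁ :=
          Filter.Eventually.of_forall hxmax
        have hBx0 : ⟪B, Bx⟫ = 0 := by
          have h1 := (hfx x₁).deriv
          have h2 := hlocmax.deriv_eq_zero
          rw [h1] at h2
          linarith
        -- second spatial derivative of |b|^2 nonpositive at x₁
        have hderiv_eq : deriv (fun y => ‖b t₁ y‖ ^ 2)
            = fun x => 2 * ⟪b t₁ x, deriv (b t₁) x⟫ :=
          funext fun x => (hfx x).deriv
        have hD2 : HasDerivAt (deriv (fun y => ‖b t₁ y‖ ^ 2))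
            (2 * (⟪B, Bxx⟫ + ⟪Bx, Bx⟫)) x₁ := by
          rw [hderiv_eq]
          exact ((hbxd t₁ x₁).inner ℝ ((hbxd2 t₁ x₁).hasDerivAt)).const_mul 2
        have hsec : ⟪B, Bxx⟫ + ‖Bx‖ ^ 2 ≤ 0 := by
          have h1 := rmp_second_deriv_nonpos
            (f := fun y => ‖b t₁ y‖ ^ 2) (x₀ := x₁)
            (fun x => (hfx x).differentiableAt) hD2.differentiableAt hxmax
          rw [hD2.deriv] at h1
          rw [← real_inner_self_eq_norm_sq]
          linarith
        -- ∂ₓ u ≥ 0 at (t₁, x₁)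
        have hUx0 : 0 ≤ Ux := by
          have hint : IntervalIntegrable (fun y => ‖b t₁ y‖ ^ 2) volume 0 1 :=
            (((hbx t₁).continuous.norm).pow 2).intervalIntegrable 0 1
          have hintle : (∫ y in (0:ℝ)..1, ‖b t₁ y‖ ^ 2) ≤ ‖B‖ ^ 2 := by
            have h1 : (∫ y in (0:ℝ)..1, ‖b t₁ y‖ ^ 2)
                ≤ ∫ _y in (0:ℝ)..1, ‖B‖ ^ 2 :=
              intervalIntegral.integral_mono_on zero_le_one hint
                intervalIntegrable_const (fun y _ => hxmax y)
            simpa using h1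
          rw [hUxdef, hux t₁ ht1 x₁]
          linarith
        -- time derivative of |b|^2 at (t₁, x₁) is ≥ δ
        have hft : HasDerivAt (fun s => ‖b s x₁‖ ^ 2) (2 * ⟪B, Bt⟫) t₁ :=
          rmp_hasDerivAt_norm_sq (hbt x₁ t₁)
        have hδle : δ ≤ 2 * ⟪B, Bt⟫ := by
          have hsl : Filter.Tendsto (slope (fun s => ‖b s x₁‖ ^ 2) t₁) (𝓝[<] t₁)
              (𝓝 (2 * ⟪B, Bt⟫)) :=
            (hasDerivAt_iff_tendsto_slope.mp hft).mono_left
              (nhdsWithin_mono _ (fun y hy => ne_of_lt hy))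
          have hev : ∀ᶠ s in 𝓝[<] t₁, δ ≤ slope (fun s => ‖b s x₁‖ ^ 2) t₁ s := by
            filter_upwards [Ioo_mem_nhdsLT_of_mem (Set.mem_Ioc.mpr ⟨h0, le_rfl⟩)] with s hs
            have hmem : ((s, x₁) : ℝ × ℝ) ∈ K :=
              ⟨⟨hs.1.le, hs.2.le.trans ht1.2⟩, hx1⟩
            have h := hpmax' _ hmem
            simp only at h
            have hneg : s - t₁ < 0 := sub_neg.mpr hs.2
            rw [slope_def_field, le_div_iff_of_neg hneg, ← hBdef]
            linarith
          exact ge_of_tendsto hsl hev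
        -- PDE at (t₁, x₁)
        have hprod : HasDerivAt (fun y => u t₁ y • b t₁ y) (U • Bx + Ux • B) x₁ :=
          (hud t₁ x₁).smul (hbxd t₁ x₁)
        have hBt : Bt = ε • Bxx - (U • Bx + Ux • B) := by
          have h := hpde t₁ ht1 x₁
          have h2 : deriv (fun y => u t₁ y • b t₁ y) x₁ = U • Bx + Ux • B := hprod.deriv
          rw [← h2]
          exact eq_sub_of_add_eq h
        -- contradiction
        have hcomp : 2 * ⟪B, Bt⟫ = 2 * ε * ⟪B, Bxx⟫ - 2 * U * ⟪B, Bx⟫ - 2 * Ux * ‖B‖ ^ 2 := by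
          rw [hBt]
          simp only [inner_sub_right, inner_add_right, real_inner_smul_right,
            real_inner_self_eq_norm_sq]
          ring
        rw [hcomp, hBx0] at hδle
        nlinarith [sq_nonneg ‖B‖, sq_nonneg ‖Bx‖, mul_nonneg hε (neg_nonneg.mpr
          (by linarith [sq_nonneg ‖Bx‖] : ⟪B, Bxx⟫ ≤ 0)), mul_nonneg hUx0 (sq_nonneg ‖B‖)]
    have hδt : δ * t₀ ≤ δ * T := mul_le_mul_of_nonneg_left ht₀.2 hδ.le
    linarith
  by_contra hcon
  push_neg at hcon
  have hδ : 0 < (‖b t₀ x₀‖ ^ 2 - S ^ 2) / (2 * T) := by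
    apply div_pos (by linarith) (by linarith)
  have h := key _ hδ
  have hTne : (‖b t₀ x₀‖ ^ 2 - S ^ 2) / (2 * T) * T = (‖b t₀ x₀‖ ^ 2 - S ^ 2) / 2 := by
    field_simp
  rw [hTne] at h
  linarith
end
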